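/- arXiv:math/0202218 — 6 statements merged into one kernel-verified Lean document; each statement's English description precedes it below -/
import Mathlib

section
/- Let 1 ≤ a < a+l ≤ k and n ≥ k. Then c_{a,l}^k(n) = (k-l-1)·c_{a,l}^k(n-1) + Σ_{j=0}^{⌊(n-k)/l⌋+1} (-1)^j · binom(n-k+2-(j-1)(l-1), j+1) · c_{a,l}^k(n-1-j). -/
open Finset

/-- `π` contains an occurrence of the generalized pattern given by `σ ∈ S_k`,
where `adj j` means that positions `j` and `j+1` of the pattern must be
matched to adjacent positions of the permutation. -/
def IsOcc {n k : ℕ} (π : Equiv.Perm (Fin n)) (σ : Equiv.Perm (Fin k)) (adj : ℕ → Prop) : Prop :=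
  ∃ ι : Fin k → Fin n, StrictMono ι ∧
    (∀ j : ℕ, ∀ hj : j + 1 < k, adj j → (ι ⟨j + 1, hj⟩ : ℕ) = (ι ⟨j, by omega⟩ : ℕ) + 1) ∧
    (∀ s t : Fin k, σ s < σ t ↔ π (ι s) < π (ι t))

/-- `π` avoids every pattern in `C_{a,l}^k` (patterns `σ₁σ₂-σ₃-⋯-σ_k` with
`σ₁ = a`, `σ₂ = a + l`, first two letters adjacent); values are `1`-based. -/
def AvoidsC (a l k : ℕ) {n : ℕ} (π : Equiv.Perm (Fin n)) : Prop :=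
  ∀ σ : Equiv.Perm (Fin k), ∀ h0 : 0 < k, ∀ h1 : 1 < k,
    (σ ⟨0, h0⟩ : ℕ) + 1 = a → (σ ⟨1, h1⟩ : ℕ) + 1 = a + l →
    ¬ IsOcc π σ (fun j => j = 0)

/-- `c_{a,l}^k(n)`. -/
noncomputable def cC (a l k n : ℕ) : ℕ :=
  Nat.card {π : Equiv.Perm (Fin n) // AvoidsC a l k π}

/-- `c_{a,l}^k(n; j)`: additionally the first letter of the permutation is `j` (1-based). -/
noncomputable def cCf (a l k n j : ℕ) : ℕ :=
  Nat.card {π : Equiv.Perm (Fin n) //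
    AvoidsC a l k π ∧ ∀ hn : 0 < n, (π ⟨0, hn⟩ : ℕ) + 1 = j}

/-!
An occurrence of a pattern of `C_{a,l}^k` is pinned down by its first two letters
`π i < π (i + 1)`: one exists iff, to the right of position `i + 1`, at least `a - 1` letters
lie below `π i`, at least `l - 1` between `π i` and `π (i + 1)`, and at least `k - a - l` above
`π (i + 1)`. So `π` avoids `C_{a,l}^k` iff its standardized tail does and no occurrence starts
at its first letter, a condition on the first two letters alone. Sorting by the first letter
gives `c(n) = n c(n - 1) - B(n, a)`, where `B(n, p)` (`headOccCount`) counts the permutations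
with first letter `≥ p` which fail only at their first letter. Decomposing their tails in the
same way expresses `B(n, p)` through `c(n - 2)` and the `B(n - 1, q)`; this recursion is solved
by the alternating binomial sum, the hockey-stick identity carrying out the summation over
first letters.
-/

namespace CPattern

variable {a l k : ℕ}

section Ranks

variable {N : ℕ}

lemma card_filter_comp_perm (τ : Equiv.Perm (Fin N)) (p : Fin N → Prop) [DecidablePred p] :
    #{t | p (τ t)} = #{v | p v} :=
  card_equiv τ (by simp)

lemma card_filter_fin_lt (c : Fin N) : #{v | v < c} = c := by
  rw [filter_gt_eq_Iio, Fin.card_Iio]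

lemma card_filter_fin_gt (c : Fin N) : #{v | c < v} = N - 1 - c := by
  rw [filter_lt_eq_Ioi, Fin.card_Ioi]

lemma card_filter_fin_lt_lt (u v : Fin N) : #{w | u < w ∧ w < v} = v - u - 1 := by
  rw [filter_lt_lt_eq_Ioo, Fin.card_Ioo]

lemma val_apply_eq_card (τ : Equiv.Perm (Fin N)) (s : Fin N) : (τ s : ℕ) = #{t | τ t < τ s} := by
  rw [card_filter_comp_perm τ (· < τ s), card_filter_fin_lt]

lemma exists_perm_lt_iff {α : Type*} [LinearOrder α] {f : Fin N → α}
    (hf : Function.Injective f) : ∃ σ : Equiv.Perm (Fin N), ∀ s t, σ s < σ t ↔ f s < f t := by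
  have hmono : StrictMono (f ∘ Tuple.sort f) :=
    (Tuple.monotone_sort f).strictMono_of_injective (hf.comp (Tuple.sort f).injective)
  refine ⟨(Tuple.sort f).symm, fun s t => ?_⟩
  simpa using (hmono.lt_iff_lt (a := (Tuple.sort f).symm s) (b := (Tuple.sort f).symm t)).symm

end Ranks

variable (a l k) in
/-- The adjacent positions `p`, `q` carry the first two letters of an occurrence of a pattern
of `C_{a,l}^k` (see `avoidsC_iff`): the other `k - 2` letters can be taken anywhere to the
right of `q`, so only their number in each of the three value ranges matters. -/
def LocalOcc {N : ℕ} {α : Type*} [LinearOrder α] (w : Fin N → α) (p q : Fin N) : Prop :=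
  (q : ℕ) = p + 1 ∧ w p < w q ∧
    a - 1 ≤ #{t | q < t ∧ w t < w p} ∧
    l - 1 ≤ #{t | q < t ∧ w p < w t ∧ w t < w q} ∧
    k - a - l ≤ #{t | q < t ∧ w q < w t}

section Characterization

variable {N : ℕ} {π : Equiv.Perm (Fin N)}

lemma card_filter_le_card_filter_of_strictMono {ι : Fin k → Fin N} (hι : StrictMono ι)
    (s₀ : Fin k) (P : Fin k → Prop) (Q : Fin N → Prop) [DecidablePred P] [DecidablePred Q]
    (hPQ : ∀ s, P s → s₀ < s ∧ Q (ι s)) : #{s | P s} ≤ #{t | ι s₀ < t ∧ Q t} := by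
  refine card_le_card_of_injOn ι (fun s hs => ?_) hι.injective.injOn
  simp only [coe_filter, mem_univ, true_and, Set.mem_ofPred_eq] at hs ⊢
  exact ⟨hι (hPQ s hs).1, (hPQ s hs).2⟩

lemma localOcc_of_isOcc {σ : Equiv.Perm (Fin k)} (h0 : 0 < k) (h1 : 1 < k)
    (hσ0 : (σ ⟨0, h0⟩ : ℕ) + 1 = a) (hσ1 : (σ ⟨1, h1⟩ : ℕ) + 1 = a + l)
    (hocc : IsOcc π σ (fun j => j = 0)) : ∃ p q, LocalOcc a l k π p q := by
  obtain ⟨ι, hι, hadj, hσπ⟩ := hocc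
  set s₀ : Fin k := ⟨0, h0⟩
  set s₁ : Fin k := ⟨1, h1⟩
  have hσ01 : σ s₀ < σ s₁ :=
    lt_of_le_of_ne (by rw [Fin.le_def]; omega) (σ.injective.ne (by simp [s₀, s₁]))
  have hs₁ : ∀ s, s ≠ s₀ → s ≠ s₁ → s₁ < s := fun s hne₀ hne₁ => by
    have := Fin.val_ne_of_ne hne₀; have := Fin.val_ne_of_ne hne₁
    rw [Fin.lt_def]; simp only [s₀, s₁] at *; omega
  refine ⟨ι s₀, ι s₁, hadj 0 h1 rfl, (hσπ _ _).1 hσ01, ?_, ?_, ?_⟩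
  · calc a - 1 = #{s | σ s < σ s₀} := by rw [← val_apply_eq_card]; omega
      _ ≤ _ := card_filter_le_card_filter_of_strictMono hι s₁ _ _ fun s hs =>
        ⟨hs₁ s (by rintro rfl; exact hs.false) (by rintro rfl; exact (hs.trans hσ01).false),
          (hσπ _ _).1 hs⟩
  · calc l - 1 = #{s | σ s₀ < σ s ∧ σ s < σ s₁} := by
          rw [card_filter_comp_perm σ (fun v => σ s₀ < v ∧ v < σ s₁), card_filter_fin_lt_lt]
          omega
      _ ≤ _ := card_filter_le_card_filter_of_strictMono hι s₁ _ _ fun s hs =>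
        ⟨hs₁ s (by rintro rfl; exact hs.1.false) (by rintro rfl; exact hs.2.false),
          (hσπ _ _).1 hs.1, (hσπ _ _).1 hs.2⟩
  · calc k - a - l = #{s | σ s₁ < σ s} := by
          rw [card_filter_comp_perm σ (σ s₁ < ·), card_filter_fin_gt]; omega
      _ ≤ _ := card_filter_le_card_filter_of_strictMono hι s₁ _ _ fun s hs =>
        ⟨hs₁ s (by rintro rfl; exact (hσ01.trans hs).false) (by rintro rfl; exact hs.false),
          (hσπ _ _).1 hs⟩

lemma card_filter_comp_orderEmbOfFin (P : Finset (Fin N)) (hP : #P = k) (R : Fin N → Prop)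
    [DecidablePred R] : #{s | R (P.orderEmbOfFin hP s)} = #(P.filter R) := by
  conv_rhs => rw [← image_orderEmbOfFin_univ P hP]
  rw [filter_image, card_image_of_injective _ (P.orderEmbOfFin hP).injective]

lemma orderEmbOfFin_zero_one {P : Finset (Fin N)} (hP : #P = k) (h0 : 0 < k) (h1 : 1 < k)
    {p q : Fin N} (hpq : (q : ℕ) = p + 1) (hp : p ∈ P) (hq : q ∈ P) (hmin : ∀ x ∈ P, p ≤ x) :
    P.orderEmbOfFin hP ⟨0, h0⟩ = p ∧ P.orderEmbOfFin hP ⟨1, h1⟩ = q := by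
  set ι := P.orderEmbOfFin hP
  have hι0 : ι ⟨0, h0⟩ = p :=
    (orderEmbOfFin_zero hP h0).trans (le_antisymm (min'_le P p hp) (hmin _ (min'_mem _ _)))
  refine ⟨hι0, le_antisymm ?_ ?_⟩
  · obtain ⟨s, hs⟩ : q ∈ Set.range ι := by rwa [range_orderEmbOfFin]
    have hs0 : (s : ℕ) ≠ 0 := fun h => by
      rw [show s = ⟨0, h0⟩ from Fin.ext h, hι0] at hs; omega
    rw [← hs]
    exact ι.monotone (Fin.le_def.2 (by dsimp only; omega))
  · have : p < ι ⟨1, h1⟩ := hι0 ▸ ι.strictMono (Fin.lt_def.2 (by simp))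
    rw [Fin.le_def]; rw [Fin.lt_def] at this; omega

lemma not_avoidsC_of_finset {P : Finset (Fin N)} (hP : #P = k) {p q : Fin N}
    (hpq : (q : ℕ) = p + 1) (hp : p ∈ P) (hq : q ∈ P) (hmin : ∀ x ∈ P, p ≤ x)
    (hrp : #(P.filter (π · < π p)) + 1 = a) (hrq : #(P.filter (π · < π q)) + 1 = a + l) :
    ¬ AvoidsC a l k π := by
  have hk1 : 1 < k := hP ▸ one_lt_card.2 ⟨p, hp, q, hq, fun h => by simp [h] at hpq⟩
  have hk0 : 0 < k := by omega
  set ι := P.orderEmbOfFin hP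
  obtain ⟨hι0, hι1⟩ := orderEmbOfFin_zero_one hP hk0 hk1 hpq hp hq hmin
  obtain ⟨σ, hσ⟩ := exists_perm_lt_iff (π.injective.comp ι.injective)
  have hrank : ∀ s, (σ s : ℕ) = #(P.filter fun x => π x < π (ι s)) := fun s => by
    rw [val_apply_eq_card, ← card_filter_comp_orderEmbOfFin P hP]
    simp only [hσ, Function.comp_apply, ι]
  refine fun hav => hav σ hk0 hk1 (by rw [hrank, hι0, hrp]) (by rw [hrank, hι1, hrq])
    ⟨ι, ι.strictMono, ?_, hσ⟩
  rintro j hj rfl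
  show (ι ⟨1, hk1⟩ : ℕ) = ι ⟨0, hk0⟩ + 1
  rw [hι0, hι1, hpq]

/-- The positions of the occurrence are `p`, `q` and, in each of the three value ranges,
exactly as many positions right of `q` as the pattern needs there. -/
lemma not_avoidsC_of_localOcc (ha : 1 ≤ a) (hl : 1 ≤ l) (hk : a + l ≤ k) {p q : Fin N}
    (h : LocalOcc a l k π p q) : ¬ AvoidsC a l k π := by
  obtain ⟨hpq, hlt, hB, hM, hT⟩ := h
  obtain ⟨B, hBs, hBc⟩ := exists_subset_card_eq hB
  obtain ⟨M, hMs, hMc⟩ := exists_subset_card_eq hM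
  obtain ⟨T, hTs, hTc⟩ := exists_subset_card_eq hT
  have memB : ∀ x ∈ B, q < x ∧ π x < π p := fun x hx => by simpa using hBs hx
  have memM : ∀ x ∈ M, q < x ∧ π p < π x ∧ π x < π q := fun x hx => by simpa using hMs hx
  have memT : ∀ x ∈ T, q < x ∧ π q < π x := fun x hx => by simpa using hTs hx
  have hpq' : p < q := Fin.lt_def.2 (by omega)
  have hBM : Disjoint B M := disjoint_left.2 fun x hxB hxM =>
    ((memB x hxB).2.trans (memM x hxM).2.1).false
  have hBMT : Disjoint (B ∪ M) T := disjoint_left.2 fun x hx hxT => by grind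
  refine not_avoidsC_of_finset (P := insert p (insert q (B ∪ M ∪ T))) ?_ hpq (by simp) (by simp)
    (fun x hx => by simp only [mem_insert, mem_union] at hx; grind) ?_ ?_
  · rw [card_insert_of_notMem (by grind), card_insert_of_notMem (by grind),
      card_union_of_disjoint hBMT, card_union_of_disjoint hBM, hBc, hMc, hTc]
    omega
  · have : (insert p (insert q (B ∪ M ∪ T))).filter (π · < π p) = B := by
      ext x; simp only [mem_filter, mem_insert, mem_union]; grind
    rw [this, hBc]; omega
  · have : (insert p (insert q (B ∪ M ∪ T))).filter (π · < π q) = insert p (B ∪ M) := by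
      ext x; simp only [mem_filter, mem_insert, mem_union]; grind
    rw [this, card_insert_of_notMem (by grind), card_union_of_disjoint hBM, hBc, hMc]
    omega

theorem avoidsC_iff (ha : 1 ≤ a) (hl : 1 ≤ l) (hk : a + l ≤ k) :
    AvoidsC a l k π ↔ ∀ p q, ¬ LocalOcc a l k π p q := by
  refine ⟨fun hav p q h => not_avoidsC_of_localOcc ha hl hk h hav,
    fun H σ h0 h1 hσ0 hσ1 hocc => ?_⟩
  obtain ⟨p, q, h⟩ := localOcc_of_isOcc h0 h1 hσ0 hσ1 hocc
  exact H p q h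

end Characterization

section Tail

variable {N : ℕ} {α β : Type*} [LinearOrder α] [LinearOrder β]

lemma localOcc_comp_strictMono {g : α → β} (hg : StrictMono g) (w : Fin N → α) (p q : Fin N) :
    LocalOcc a l k (g ∘ w) p q ↔ LocalOcc a l k w p q := by
  simp [LocalOcc, hg.lt_iff_lt]

lemma localOcc_comp_succ (w : Fin (N + 1) → α) (p q : Fin N) :
    LocalOcc a l k (w ∘ Fin.succ) p q ↔ LocalOcc a l k w p.succ q.succ := by
  simp [LocalOcc, Fin.card_filter_univ_succ]

lemma forall_not_localOcc_iff (w : Fin (N + 2) → α) :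
    (∀ p q, ¬ LocalOcc a l k w p q) ↔
      ¬ LocalOcc a l k w 0 1 ∧ ∀ p q, ¬ LocalOcc a l k (w ∘ Fin.succ) p q := by
  refine ⟨fun H => ⟨H 0 1, fun p q h => H _ _ ((localOcc_comp_succ w p q).1 h)⟩,
    fun ⟨H0, H⟩ p q h => ?_⟩
  induction p using Fin.cases with
  | zero => exact H0 (by rwa [show q = 1 from Fin.ext (by simpa using h.1)] at h)
  | succ p =>
    induction q using Fin.cases with
    | zero => simpa using h.1
    | succ q => exact H p q ((localOcc_comp_succ w p q).2 h)

lemma card_filter_one_lt (π : Equiv.Perm (Fin (N + 2))) (R : Fin (N + 2) → Prop)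
    [DecidablePred R] (h0 : ¬ R (π 0)) (h1 : ¬ R (π 1)) :
    #{t | 1 < t ∧ R (π t)} = #{v | R v} := by
  rw [← card_filter_comp_perm π R]
  congr 1
  refine filter_congr fun t _ => and_iff_right_of_imp fun ht => ?_
  rw [Fin.lt_def, Fin.val_one]
  by_contra h
  obtain rfl | rfl : t = 0 ∨ t = 1 := by
    simp only [Fin.ext_iff, Fin.val_zero, Fin.val_one]; omega
  exacts [h0 ht, h1 ht]

lemma localOcc_zero_one_iff (hl : 1 ≤ l) (π : Equiv.Perm (Fin (N + 2))) :
    LocalOcc a l k π 0 1 ↔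
      a ≤ π 0 + 1 ∧ (π 0 : ℕ) + l ≤ π 1 ∧ (π 1 : ℕ) + k ≤ N + 1 + a + l := by
  have counts : π 0 < π 1 →
      #{t | 1 < t ∧ π t < π 0} = π 0 ∧
      #{t | 1 < t ∧ π 0 < π t ∧ π t < π 1} = (π 1 : ℕ) - π 0 - 1 ∧
      #{t | 1 < t ∧ π 1 < π t} = N + 1 - π 1 := fun hlt => by
    rw [card_filter_one_lt π (· < π 0) (lt_irrefl _) hlt.asymm, card_filter_fin_lt,
      card_filter_one_lt π (fun v => π 0 < v ∧ v < π 1) (fun h => h.1.false) (fun h => h.2.false),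
      card_filter_fin_lt_lt, card_filter_one_lt π (π 1 < ·) hlt.asymm (lt_irrefl _),
      card_filter_fin_gt]
    simp
  constructor
  · rintro ⟨-, hlt, hB, hM, hT⟩
    obtain ⟨h1, h2, h3⟩ := counts hlt
    rw [Fin.lt_def] at hlt
    omega
  · rintro ⟨hB, hM, hT⟩
    have hlt : π 0 < π 1 := Fin.lt_def.2 (by omega)
    obtain ⟨h1, h2, h3⟩ := counts hlt
    refine ⟨rfl, hlt, ?_, ?_, ?_⟩ <;> omega

end Tail

section ConsPerm

variable {M : ℕ}

noncomputable def consPerm (c : Fin (M + 1)) (ρ : Equiv.Perm (Fin M)) :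
    Equiv.Perm (Fin (M + 1)) :=
  Equiv.ofBijective (Fin.cons c (c.succAbove ∘ ρ)) <| Finite.injective_iff_bijective.1 <|
    Fin.cons_injective_iff.2
      ⟨fun ⟨t, ht⟩ => c.succAbove_ne (ρ t) ht, Fin.succAbove_right_injective.comp ρ.injective⟩

@[simp] lemma consPerm_zero (c : Fin (M + 1)) (ρ : Equiv.Perm (Fin M)) : consPerm c ρ 0 = c :=
  rfl

@[simp] lemma consPerm_succ (c : Fin (M + 1)) (ρ : Equiv.Perm (Fin M)) (t : Fin M) :
    consPerm c ρ t.succ = c.succAbove (ρ t) := rfl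

lemma consPerm_bijective :
    Function.Bijective fun x : Fin (M + 1) × Equiv.Perm (Fin M) => consPerm x.1 x.2 := by
  refine (Fintype.bijective_iff_injective_and_card _).2 ⟨?_, ?_⟩
  · rintro ⟨c, ρ⟩ ⟨c', ρ'⟩ h
    obtain rfl : c = c' := by simpa using congr($h 0)
    obtain rfl : ρ = ρ' := Equiv.ext fun t => Fin.succAbove_right_injective (p := c) (by
      simpa using congr($h t.succ))
    rfl
  · simp [Fintype.card_perm, Nat.factorial_succ]

lemma card_filter_apply_zero_eq (c : Fin (M + 1)) (P : Equiv.Perm (Fin (M + 1)) → Prop)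
    [DecidablePred P] : #{π | π 0 = c ∧ P π} = #{ρ | P (consPerm c ρ)} := by
  symm
  refine card_bij (fun ρ _ => consPerm c ρ) (fun ρ hρ => by simpa using hρ)
    (fun ρ _ ρ' _ h => (Prod.ext_iff.1 (consPerm_bijective.1 (a₁ := (c, ρ)) (a₂ := (c, ρ')) h)).2)
    fun π hπ => ?_
  obtain ⟨⟨c', ρ⟩, rfl⟩ := consPerm_bijective.2 π
  simp only [mem_filter, mem_univ, true_and, consPerm_zero] at hπ
  obtain ⟨rfl, hP⟩ := hπ
  exact ⟨ρ, by simpa using hP, rfl⟩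

lemma val_succAbove (c : Fin (M + 1)) (x : Fin M) :
    (c.succAbove x : ℕ) = if (x : ℕ) < c then (x : ℕ) else (x : ℕ) + 1 := by
  simp only [Fin.succAbove, Fin.lt_def, Fin.val_castSucc]
  split_ifs <;> simp

theorem avoidsC_consPerm_iff (ha : 1 ≤ a) (hl : 1 ≤ l) (hk : a + l ≤ k) (c : Fin (M + 2))
    (ρ : Equiv.Perm (Fin (M + 1))) :
    AvoidsC a l k (consPerm c ρ) ↔
      AvoidsC a l k ρ ∧ ¬ (a ≤ c + 1 ∧ c + l ≤ ρ 0 + 1 ∧ ρ 0 + 1 + k ≤ M + 1 + a + l) := by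
  have htail : ⇑(consPerm c ρ) ∘ Fin.succ = c.succAbove ∘ ρ := funext (consPerm_succ c ρ)
  have h1 : consPerm c ρ 1 = c.succAbove (ρ 0) := consPerm_succ c ρ 0
  rw [avoidsC_iff ha hl hk, avoidsC_iff ha hl hk, forall_not_localOcc_iff, htail,
    localOcc_zero_one_iff hl, h1, consPerm_zero, and_comm]
  simp only [localOcc_comp_strictMono (Fin.strictMono_succAbove c), val_succAbove]
  refine and_congr Iff.rfl ?_
  -- `c + l ≤ c.succAbove (ρ 0)` forces the `ρ 0 + 1` branch of `succAbove`
  split_ifs <;> omega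

end ConsPerm

section Counting

open scoped Classical

lemma cC_eq_card (N : ℕ) : cC a l k N = #{π : Equiv.Perm (Fin N) | AvoidsC a l k π} := by
  rw [cC, Nat.card_eq_fintype_card, Fintype.card_subtype]

lemma cCf_succ_eq_card {M : ℕ} (j : ℕ) :
    cCf a l k (M + 1) j =
      #{π : Equiv.Perm (Fin (M + 1)) | AvoidsC a l k π ∧ (π 0 : ℕ) + 1 = j} := by
  rw [cCf, Nat.card_eq_fintype_card, Fintype.card_subtype]
  simp

lemma cCf_succ_eq_card_consPerm {M : ℕ} (c : Fin (M + 1)) :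
    cCf a l k (M + 1) (c + 1) = #{ρ | AvoidsC a l k (consPerm c ρ)} := by
  rw [cCf_succ_eq_card, ← card_filter_apply_zero_eq c (AvoidsC a l k)]
  congr 1; ext π; simp [Fin.ext_iff, and_comm]

lemma cC_succ_eq_sum (M : ℕ) : cC a l k (M + 1) = ∑ j ∈ Icc 1 (M + 1), cCf a l k (M + 1) j := by
  rw [cC_eq_card, card_eq_sum_card_fiberwise (f := fun π => (π 0 : ℕ) + 1) (t := Icc 1 (M + 1))]
  · simp only [cCf_succ_eq_card, filter_filter]
  · intro π _
    simpa using (π 0).isLt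

lemma card_filter_avoidsC_apply_zero_mem_Icc {M : ℕ} (q r : ℕ) :
    #{ρ : Equiv.Perm (Fin (M + 1)) | AvoidsC a l k ρ ∧ (ρ 0 : ℕ) + 1 ∈ Icc q r} =
      ∑ m ∈ Icc q r, cCf a l k (M + 1) m := by
  rw [card_eq_sum_card_fiberwise (f := fun ρ => (ρ 0 : ℕ) + 1) (t := Icc q r)]
  · simp only [cCf_succ_eq_card, filter_filter]
    refine sum_congr rfl fun m hm => congr_arg card (filter_congr fun ρ _ => ?_)
    exact ⟨fun h => ⟨h.1.1, h.2⟩, fun h => ⟨⟨h.1, h.2 ▸ hm⟩, h.2⟩⟩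
  · intro ρ hρ
    simp only [coe_filter, mem_univ, true_and, Set.mem_ofPred_eq] at hρ
    exact hρ.2

lemma avoidsC_of_lt {N : ℕ} (hN : N < k) (π : Equiv.Perm (Fin N)) : AvoidsC a l k π := by
  rintro σ - - - - ⟨ι, hι, -, -⟩
  have := Fintype.card_le_of_injective ι hι.injective
  simp only [Fintype.card_fin] at this
  omega

lemma cCf_eq_cC_of_lt {M j : ℕ} (hM : M + 1 < k) (hj1 : 1 ≤ j) (hj2 : j ≤ M + 1) :
    cCf a l k (M + 1) j = cC a l k M := by
  obtain ⟨c, rfl⟩ : ∃ c : Fin (M + 1), j = c + 1 := ⟨⟨j - 1, by omega⟩, by dsimp only; omega⟩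
  rw [cCf_succ_eq_card_consPerm, cC_eq_card]
  simp [avoidsC_of_lt hM, avoidsC_of_lt (show M < k by omega)]

end Counting

variable (a l k) in
/-- For `q = j + l - 1` these are the tails which, behind a first letter `j ≥ a`, complete an
occurrence (`cCf_eq_cC_sub`). -/
noncomputable def tailCount (M q : ℕ) : ℤ := ∑ m ∈ Icc q (M + a + l - k), (cCf a l k M m : ℤ)

variable (a l k) in
/-- The permutations of length `N` with first letter at least `p` whose tail avoids `C_{a,l}^k`
but which have an occurrence starting at their first letter. -/
noncomputable def headOccCount (N p : ℕ) : ℤ :=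
  ∑ j ∈ Icc p (N - k + a), tailCount a l k (N - 1) (j + l - 1)

theorem cCf_eq_cC_sub (ha : 1 ≤ a) (hl : 1 ≤ l) (hk : a + l ≤ k) {M j : ℕ} (hj1 : 1 ≤ j)
    (hj2 : j ≤ M + 2) :
    (cCf a l k (M + 2) j : ℤ) =
      cC a l k (M + 1) - if a ≤ j then tailCount a l k (M + 1) (j + l - 1) else 0 := by
  classical
  obtain ⟨c, rfl⟩ : ∃ c : Fin (M + 2), j = c + 1 := ⟨⟨j - 1, by omega⟩, by dsimp only; omega⟩
  set headOcc : Equiv.Perm (Fin (M + 1)) → Prop := fun ρ =>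
    a ≤ c + 1 ∧ c + l ≤ ρ 0 + 1 ∧ ρ 0 + 1 + k ≤ M + 1 + a + l
  have hsplit :
      cCf a l k (M + 2) (c + 1) + #{ρ | AvoidsC a l k ρ ∧ headOcc ρ} = cC a l k (M + 1) := by
    rw [cCf_succ_eq_card_consPerm, cC_eq_card,
      ← card_filter_add_card_filter_not (s := {ρ | AvoidsC a l k ρ}) headOcc,
      filter_filter, filter_filter, add_comm]
    simp only [avoidsC_consPerm_iff ha hl hk, headOcc]
  have hban : (#{ρ | AvoidsC a l k ρ ∧ headOcc ρ} : ℤ) =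
      if a ≤ c + 1 then tailCount a l k (M + 1) (c + 1 + l - 1) else 0 := by
    split_ifs with h
    · rw [tailCount, ← Nat.cast_sum, ← card_filter_avoidsC_apply_zero_mem_Icc]
      congr 2; ext ρ
      simp only [mem_filter, mem_univ, true_and, mem_Icc, headOcc]
      exact and_congr_right fun _ => by omega
    · simp [headOcc, h]
  omega

lemma tailCount_eq_zero {M q : ℕ} (h : M + a + l - k < q) : tailCount a l k M q = 0 := by
  rw [tailCount, Icc_eq_empty (by omega), sum_empty]

lemma sum_Icc_tailCount (ha : 1 ≤ a) {N p R : ℕ} (hN : k ≤ N + 1) (hR : N + 1 - k + a ≤ R) :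
    ∑ j ∈ Icc p R, tailCount a l k N (j + l - 1) = headOccCount a l k (N + 1) p := by
  refine (sum_subset (Icc_subset_Icc_right hR) fun j hj hj' => tailCount_eq_zero ?_).symm
  simp only [mem_Icc, not_and, not_le] at hj hj'
  have := hj' hj.1
  omega

theorem cC_eq_mul_sub (ha : 1 ≤ a) (hl : 1 ≤ l) (hk : a + l ≤ k) {N : ℕ} (hN : k ≤ N) :
    (cC a l k N : ℤ) = N * cC a l k (N - 1) - headOccCount a l k N a := by
  obtain ⟨M, rfl⟩ : ∃ M, N = M + 2 := ⟨N - 2, by omega⟩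
  have hfilter : (Icc 1 (M + 2)).filter (a ≤ ·) = Icc a (M + 2) := by
    ext j; simp only [mem_filter, mem_Icc]; omega
  rw [cC_succ_eq_sum, Nat.cast_sum,
    sum_congr rfl fun j hj => cCf_eq_cC_sub ha hl hk (mem_Icc.1 hj).1 (mem_Icc.1 hj).2,
    sum_sub_distrib, sum_const, Nat.card_Icc, sum_ite, sum_const_zero, add_zero, hfilter,
    sum_Icc_tailCount ha hN (by omega)]
  simp

lemma tailCount_eq_sub (ha : 1 ≤ a) (hl : 1 ≤ l) (hk : a + l ≤ k) {M q : ℕ} (hM : k ≤ M)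
    (hq : a ≤ q) :
    tailCount a l k M q =
      (M + a + l - k + 1 - q : ℕ) * cC a l k (M - 1) - headOccCount a l k M q := by
  obtain ⟨M, rfl⟩ : ∃ M', M = M' + 2 := ⟨M - 2, by omega⟩
  have hstep : ∀ m ∈ Icc q (M + 2 + a + l - k),
      (cCf a l k (M + 2) m : ℤ) = cC a l k (M + 1) - tailCount a l k (M + 1) (m + l - 1) :=
    fun m hm => by
      rw [mem_Icc] at hm
      rw [cCf_eq_cC_sub ha hl hk (by omega) (by omega), if_pos (hq.trans hm.1)]
  rw [tailCount, sum_congr rfl hstep, sum_sub_distrib, sum_const, Nat.card_Icc,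
    sum_Icc_tailCount ha hM (by omega)]
  simp

/-- Pascal's rule survives `Int.toNat` sending negative upper entries to `0`, as `r ≥ 1`. -/
lemma toNat_add_one_choose_succ (x : ℤ) {r : ℕ} (hr : 1 ≤ r) :
    ((x + 1).toNat.choose (r + 1) : ℤ) = x.toNat.choose (r + 1) + x.toNat.choose r := by
  rcases le_or_gt 0 x with hx | hx
  · lift x to ℕ using hx
    rw [show ((x : ℤ) + 1).toNat = x + 1 by omega, Int.toNat_natCast, Nat.choose_succ_succ']
    push_cast; ring
  · rw [Int.toNat_eq_zero.2 (by omega), Int.toNat_eq_zero.2 hx.le,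
      Nat.choose_eq_zero_of_lt (by omega : 0 < r + 1), Nat.choose_eq_zero_of_lt (by omega : 0 < r)]
    simp

/-- The hockey-stick identity, over a range `[p, R]` that reaches every nonzero term. -/
lemma sum_Icc_toNat_choose (X : ℤ) {r p R : ℕ} (hr : 1 ≤ r) (hR : X - R ≤ r) :
    ∑ j ∈ Icc p R, ((X - j).toNat.choose r : ℤ) = (X - p + 1).toNat.choose (r + 1) := by
  rcases le_or_gt p (R + 1) with hp | hp
  · have htel := sum_Ico_sub (fun j : ℕ => -((X - j + 1).toNat.choose (r + 1) : ℤ)) hp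
    rw [Ico_add_one_right_eq_Icc] at htel
    rw [sum_congr rfl fun j _ => ?_, htel, Nat.choose_eq_zero_of_lt (by omega)]
    · simp
    · rw [show X - ((j + 1 : ℕ) : ℤ) + 1 = X - j by push_cast; ring,
        toNat_add_one_choose_succ _ hr]
      ring
  · rw [Icc_eq_empty (by omega), sum_empty, Nat.choose_eq_zero_of_lt (by omega)]
    simp

lemma headOccCount_self (ha : 1 ≤ a) (hl : 1 ≤ l) (hk : a + l ≤ k) {p : ℕ} (hp : a ≤ p) :
    headOccCount a l k k p = (((a : ℤ) - p + 2).toNat.choose 2 : ℤ) * cC a l k (k - 2) := by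
  obtain ⟨K, rfl⟩ : ∃ K, k = K + 2 := ⟨k - 2, by omega⟩
  have htail : ∀ j ∈ Icc p a, tailCount a l (K + 2) (K + 1) (j + l - 1) =
      (((a : ℤ) + 1 - j).toNat.choose 1 : ℤ) * cC a l (K + 2) K := fun j hj => by
    rw [mem_Icc] at hj
    rw [tailCount, sum_congr rfl fun m hm => by
      rw [cCf_eq_cC_of_lt (by omega) (by rw [mem_Icc] at hm; omega) (by rw [mem_Icc] at hm; omega)]]
    rw [sum_const, Nat.card_Icc, nsmul_eq_mul, Nat.choose_one_right,
      Int.toNat_of_nonneg (by omega)]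
    congr 1
    omega
  rw [headOccCount, show K + 2 - (K + 2) + a = a by omega, show K + 2 - 1 = K + 1 by omega,
    sum_congr rfl htail, ← sum_mul, sum_Icc_toNat_choose _ le_rfl (by omega)]
  congr 4
  ring

lemma headOccCount_succ (ha : 1 ≤ a) (hl : 1 ≤ l) (hk : a + l ≤ k) {N p : ℕ} (hN : k ≤ N)
    (hp : a ≤ p) :
    headOccCount a l k (N + 1) p =
      (((N : ℤ) + 1 - k + a - p + 2).toNat.choose 2 : ℤ) * cC a l k (N - 1) -
        ∑ j ∈ Icc p (N + 1 - k + a), headOccCount a l k N (j + l - 1) := by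
  have htail : ∀ j ∈ Icc p (N + 1 - k + a), tailCount a l k N (j + l - 1) =
      ((((N + 1 - k + a : ℕ) : ℤ) + 1 - j).toNat.choose 1 : ℤ) * cC a l k (N - 1) -
        headOccCount a l k N (j + l - 1) := fun j hj => by
    rw [mem_Icc] at hj
    rw [tailCount_eq_sub ha hl hk hN (by omega), Nat.choose_one_right,
      Int.toNat_of_nonneg (by omega)]
    congr 2
    omega
  rw [headOccCount, Nat.add_sub_cancel, sum_congr rfl htail, sum_sub_distrib, ← sum_mul,
    sum_Icc_toNat_choose _ le_rfl (by omega)]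
  congr 4
  omega

theorem headOccCount_eq (ha : 1 ≤ a) (hl : 1 ≤ l) (hk : a + l ≤ k) {N : ℕ} (hN : k ≤ N) {p : ℕ}
    (hp : a ≤ p) :
    headOccCount a l k N p = ∑ i ∈ range (N - k + 1), (-1) ^ i *
      (((N : ℤ) - k + a - p + 2 - i * ((l : ℤ) - 1)).toNat.choose (i + 2) : ℤ) *
        cC a l k (N - 2 - i) := by
  induction N, hN using Nat.le_induction generalizing p with
  | base =>
    rw [headOccCount_self ha hl hk hp, Nat.sub_self, zero_add, sum_range_one]
    simp only [pow_zero, one_mul, Nat.cast_zero, zero_mul, sub_zero, Nat.sub_zero, sub_self,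
      zero_add]
  | succ N hN ih =>
    set R := N + 1 - k + a with hR
    have hinner : ∀ i ∈ range (N - k + 1),
        ∑ j ∈ Icc p R, (-1) ^ i * ((((N : ℤ) - k + a - (j + l - 1 : ℕ) + 2 -
          i * ((l : ℤ) - 1))).toNat.choose (i + 2) : ℤ) * cC a l k (N - 2 - i) =
        -((-1) ^ (i + 1) * ((((N + 1 : ℕ) : ℤ) - k + a - p + 2 -
          (i + 1 : ℕ) * ((l : ℤ) - 1)).toNat.choose (i + 1 + 2) : ℤ) *
            cC a l k (N + 1 - 2 - (i + 1))) := fun i _ => by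
      set X : ℤ := (N : ℤ) - k + a - l + 3 - i * ((l : ℤ) - 1)
      have hX : ∀ j ∈ Icc p R,
          (N : ℤ) - k + a - (j + l - 1 : ℕ) + 2 - i * ((l : ℤ) - 1) = X - j := fun j hj => by
        rw [mem_Icc] at hj
        push_cast [show 1 ≤ j + l by omega]
        ring
      have hXR : X - R ≤ i + 2 := by
        have : ((R : ℕ) : ℤ) = N + 1 - k + a := by omega
        nlinarith [mul_nonneg (Int.natCast_nonneg i) (show (0 : ℤ) ≤ l - 1 by omega)]
      rw [sum_congr rfl fun j hj => by rw [hX j hj], ← sum_mul, ← mul_sum,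
        sum_Icc_toNat_choose X (by omega) (by exact_mod_cast hXR),
        show N + 1 - 2 - (i + 1) = N - 2 - i by omega,
        show X - p + 1 = ((N + 1 : ℕ) : ℤ) - k + a - p + 2 - (i + 1 : ℕ) * ((l : ℤ) - 1) by
          push_cast [X]; ring]
      ring
    rw [headOccCount_succ ha hl hk hN hp,
      sum_congr rfl fun j hj => ih (by rw [mem_Icc] at hj; omega), sum_comm, sum_congr rfl hinner, sum_neg_distrib, sub_neg_eq_add,
      show N + 1 - k + 1 = N - k + 1 + 1 by omega, sum_range_succ' _ (N - k + 1), add_comm]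
    congr 1
    simp only [pow_zero, one_mul, Nat.cast_zero, zero_mul, sub_zero, Nat.sub_zero]
    congr 3

/-- Beyond `i = d / l`, the binomial coefficients vanish. -/
lemma sum_range_choose_truncate {d l : ℕ} (hl : 1 ≤ l) (g : ℕ → ℤ) :
    ∑ i ∈ range (d / l + 1), (-1) ^ i *
      (((d : ℤ) + 2 - i * ((l : ℤ) - 1)).toNat.choose (i + 2) : ℤ) * g i =
    ∑ i ∈ range (d + 1), (-1) ^ i *
      (((d : ℤ) + 2 - i * ((l : ℤ) - 1)).toNat.choose (i + 2) : ℤ) * g i := by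
  refine sum_subset (range_subset_range.2 (by have := Nat.div_le_self d l; omega))
    fun i _ hi => ?_
  rw [mem_range, not_lt, Nat.succ_le_iff, Nat.div_lt_iff_lt_mul (by omega)] at hi
  have hi' : (d : ℤ) < i * l := by exact_mod_cast hi
  rw [Nat.choose_eq_zero_of_lt ((Int.toNat_lt' (by omega)).2 (by push_cast; linarith))]
  simp

end CPattern

open CPattern in
/-- Theorem 2.4 (main theorem): for `1 ≤ a < a + l ≤ k` and `n ≥ k`,
`c_{a,l}^k(n) = (k-l-1)·c_{a,l}^k(n-1) +
  Σ_{j=0}^{⌊(n-k)/l⌋+1} (-1)^j·binom(n-k+2-(j-1)(l-1), j+1)·c_{a,l}^k(n-1-j)`.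
(The binomial coefficient has the integer `n-k+2-(j-1)(l-1) ≥ 0` as upper entry.) -/
theorem cC_main (a l k n : ℕ) (ha : 1 ≤ a) (hl : 1 ≤ l) (hk : a + l ≤ k) (hn : k ≤ n) :
    (cC a l k n : ℤ) = (k - l - 1 : ℕ) * cC a l k (n - 1) +
      ∑ j ∈ Finset.range ((n - k) / l + 2),
        (-1 : ℤ) ^ j *
          Nat.choose (((n : ℤ) - k + 2) - ((j : ℤ) - 1) * ((l : ℤ) - 1)).toNat (j + 1) *
          cC a l k (n - 1 - j) := by
  have hocc : headOccCount a l k n a = ∑ i ∈ range ((n - k) / l + 1), (-1) ^ i *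
      ((((n - k : ℕ) : ℤ) + 2 - i * ((l : ℤ) - 1)).toNat.choose (i + 2) : ℤ) *
        cC a l k (n - 2 - i) := by
    rw [headOccCount_eq ha hl hk hn le_rfl, sum_range_choose_truncate hl]
    refine sum_congr rfl fun i _ => ?_
    push_cast [hn]
    ring_nf
  have hshift : ∀ j ∈ range ((n - k) / l + 1),
      (-1 : ℤ) ^ (j + 1) * (((n : ℤ) - k + 2 - ((j + 1 : ℕ) - 1) * ((l : ℤ) - 1)).toNat.choose
        (j + 1 + 1) : ℤ) * cC a l k (n - 1 - (j + 1)) =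
      -((-1) ^ j * ((((n - k : ℕ) : ℤ) + 2 - j * ((l : ℤ) - 1)).toNat.choose (j + 2) : ℤ) *
        cC a l k (n - 2 - j)) := fun j _ => by
    rw [show n - 1 - (j + 1) = n - 2 - j by omega]
    push_cast [hn]
    ring_nf
  have hfirst : ((n : ℤ) - k + 2 - ((0 : ℕ) - 1) * ((l : ℤ) - 1)).toNat.choose (0 + 1) =
      n - k + l + 1 := by
    simp only [Nat.cast_zero, zero_add, Nat.choose_one_right]
    omega
  rw [cC_eq_mul_sub ha hl hk hn, hocc, sum_range_succ' _ ((n - k) / l + 1),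
    sum_congr rfl hshift, sum_neg_distrib, hfirst, Nat.sub_zero]
  have hcoef : ((k - l - 1 : ℕ) : ℤ) + ((n - k + l + 1 : ℕ) : ℤ) = n := by omega
  linear_combination (-(cC a l k (n - 1) : ℤ)) * hcoef
end

section
/- For all 1 ≤ a ≤ k-l and all n ≥ 0, the number of C_{a,l}^k-avoiding permutations in S_n equals the number of C_{1,l}^k-avoiding permutations in S_n. -/
open Finset

/-
A pattern of `C_{a,l}^k` occurs in `π` with its first two letters at positions `i, i + 1` iff
`π i < π (i + 1)` and, to the right of `i + 1`, at least `a - 1` entries lie below `π i`, at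
least `l - 1` between `π i` and `π (i + 1)`, and at least `k - a - l` above `π (i + 1)`.

Write a permutation of length `m + 2` as its first letter `j` followed by the standardisation
`τ` of the remaining letters. It has such an ascent iff `τ` has one or the ascent sits at the
front, and (in `0`-based values) the latter happens iff `a - 1 ≤ j`, `j + l - 1 ≤ τ 0` and
`τ 0 + (k - a - l) < m + 1`. Subtracting `a - 1` modulo the length from both `j` and `τ 0`
turns this condition for `a` into the condition for `1`. Hence, by induction on the length, the
number of avoiders of `C_{a,l}^k` with first letter `j` equals the number of avoiders of
`C_{1,l}^k` with first letter `j - (a - 1)`; summing over `j` gives the theorem.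
-/

open Equiv

section Rank

variable {k : ℕ}

theorem card_filter_perm_apply_mem (σ : Perm (Fin k)) (s : Finset (Fin k)) :
    #{t | σ t ∈ s} = #s :=
  card_equiv σ (by simp)

theorem card_filter_perm_apply_lt (σ : Perm (Fin k)) (c : Fin k) : #{t | σ t < c} = c := by
  simpa using card_filter_perm_apply_mem σ (Iio c)

theorem card_filter_perm_apply_between (σ : Perm (Fin k)) (c d : Fin k) :
    #{t | c < σ t ∧ σ t < d} = (d : ℕ) - c - 1 := by
  simpa using card_filter_perm_apply_mem σ (Ioo c d)

theorem card_filter_perm_apply_gt (σ : Perm (Fin k)) (c : Fin k) :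
    #{t | c < σ t} = k - 1 - c := by
  simpa using card_filter_perm_apply_mem σ (Ioi c)

theorem exists_perm_lt_iff_lt {α : Type*} [LinearOrder α] {f : Fin k → α}
    (hf : Function.Injective f) : ∃ σ : Perm (Fin k), ∀ s t, σ s < σ t ↔ f s < f t := by
  have hsort : StrictMono (f ∘ Tuple.sort f) :=
    (Tuple.monotone_sort f).strictMono_of_injective (hf.comp (Tuple.sort f).injective)
  refine ⟨(Tuple.sort f).symm, fun s t => ?_⟩
  rw [← hsort.lt_iff_lt]
  simp

theorem val_eq_card_filter_lt {α : Type*} [LinearOrder α] {f : Fin k → α} {σ : Perm (Fin k)}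
    (hσ : ∀ s t, σ s < σ t ↔ f s < f t) (s : Fin k) : (σ s : ℕ) = #{t | f t < f s} := by
  simp only [← hσ, card_filter_perm_apply_lt]

end Rank

theorem Fin.val_sub_ofNat {n : ℕ} [NeZero n] (j : Fin n) {c : ℕ} (hc : c < n) :
    ((j - Fin.ofNat n c : Fin n) : ℕ) = if c ≤ (j : ℕ) then (j : ℕ) - c else (j : ℕ) + n - c := by
  rw [Fin.val_sub, Fin.val_ofNat, Nat.mod_eq_of_lt hc]
  split_ifs with h
  · rw [show n - c + j = j - c + n by omega, Nat.add_mod_right, Nat.mod_eq_of_lt (by omega)]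
  · rw [Nat.mod_eq_of_lt (by omega)]
    omega

theorem Fin.val_succAbove {m : ℕ} (j : Fin (m + 1)) (v : Fin m) :
    (j.succAbove v : ℕ) = if (v : ℕ) < j then (v : ℕ) else (v : ℕ) + 1 := by
  split_ifs with h
  · rw [Fin.succAbove_of_castSucc_lt _ _ h, Fin.val_castSucc]
  · rw [Fin.succAbove_of_le_castSucc _ _ (not_lt.mp h), Fin.val_succ]

theorem exists_strictMono_image_eq_insert_insert {α : Type*} [LinearOrder α] {p q : α}
    (hpq : p < q) {U : Finset α} (hU : ∀ u ∈ U, q < u) {k : ℕ} (hk : #U + 2 = k) :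
    ∃ ι : Fin k → α, StrictMono ι ∧ ι ⟨0, by omega⟩ = p ∧ ι ⟨1, by omega⟩ = q ∧
      univ.image ι = insert p (insert q U) := by
  subst hk
  set e := U.orderEmbOfFin rfl
  have he : ∀ j, e j ∈ U := U.orderEmbOfFin_mem rfl
  refine ⟨Fin.cons p (Fin.cons q e), ?_, rfl, rfl, ?_⟩
  · refine Fin.strictMono_cons.2 ⟨Fin.cases hpq fun j => hpq.trans (hU _ (he j)), ?_⟩
    exact Fin.strictMono_cons.2 ⟨fun j => hU _ (he j), e.strictMono⟩
  · have hrange : ∀ x, (∃ j, e j = x) ↔ x ∈ U := fun x => by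
      rw [← Set.mem_range, Finset.range_orderEmbOfFin, mem_coe]
    ext x
    simp only [mem_image, mem_univ, true_and, Fin.exists_fin_succ, Fin.cons_zero, Fin.cons_succ,
      hrange, mem_insert, @eq_comm _ p, @eq_comm _ q]

theorem card_filter_comp_eq_card_filter_image {α β : Type*} [Fintype α] [DecidableEq β]
    {ι : α → β} (hι : Function.Injective ι) (P : β → Prop) [DecidablePred P] :
    #{s | P (ι s)} = #((univ.image ι).filter P) := by
  rw [filter_image, card_image_of_injective _ hι]

section Ascent

variable (a l k : ℕ) {α : Type*} [LinearOrder α]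

def IsCAscentAt {n : ℕ} (f : Fin n → α) (i : ℕ) (hi : i + 1 < n) : Prop :=
  f ⟨i, by omega⟩ < f ⟨i + 1, hi⟩ ∧
    a - 1 ≤ #{t : Fin n | i + 1 < (t : ℕ) ∧ f t < f ⟨i, by omega⟩} ∧
    l - 1 ≤ #{t : Fin n | i + 1 < (t : ℕ) ∧ f ⟨i, by omega⟩ < f t ∧ f t < f ⟨i + 1, hi⟩} ∧
    k - (a + l) ≤ #{t : Fin n | i + 1 < (t : ℕ) ∧ f ⟨i + 1, hi⟩ < f t}

def HasCAscent {n : ℕ} (f : Fin n → α) : Prop :=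
  ∃ i, ∃ hi : i + 1 < n, IsCAscentAt a l k f i hi

variable {a l k}

theorem not_hasCAscent_of_le_one {n : ℕ} (hn : n ≤ 1) (f : Fin n → α) :
    ¬ HasCAscent a l k f := by
  rintro ⟨i, hi, -⟩
  omega

theorem hasCAscent_comp_iff {β : Type*} [LinearOrder β] {g : α → β} (hg : StrictMono g)
    {n : ℕ} (f : Fin n → α) : HasCAscent a l k (g ∘ f) ↔ HasCAscent a l k f := by
  simp only [HasCAscent, IsCAscentAt, Function.comp_apply, hg.lt_iff_lt]

theorem card_filter_lt_val_succ {n : ℕ} (c : ℕ) (p : Fin (n + 1) → Prop) [DecidablePred p] :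
    #{t : Fin (n + 1) | c + 1 < (t : ℕ) ∧ p t} = #{w : Fin n | c < (w : ℕ) ∧ p w.succ} := by
  rw [Fin.card_filter_univ_succ]
  simp

theorem isCAscentAt_succ_iff {n : ℕ} (f : Fin (n + 1) → α) (i : ℕ) (hi : i + 1 + 1 < n + 1) :
    IsCAscentAt a l k f (i + 1) hi ↔ IsCAscentAt a l k (f ∘ Fin.succ) i (by omega) := by
  simp only [IsCAscentAt, card_filter_lt_val_succ]
  rfl

theorem hasCAscent_iff {n : ℕ} (f : Fin (n + 1) → α) :
    HasCAscent a l k f ↔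
      (∃ h : 1 < n + 1, IsCAscentAt a l k f 0 h) ∨ HasCAscent a l k (f ∘ Fin.succ) := by
  constructor
  · rintro ⟨_ | i, hi, h⟩
    · exact .inl ⟨hi, h⟩
    · exact .inr ⟨i, by omega, (isCAscentAt_succ_iff f i hi).mp h⟩
  · rintro (⟨hi, h⟩ | ⟨i, hi, h⟩)
    · exact ⟨0, hi, h⟩
    · exact ⟨i + 1, by omega, (isCAscentAt_succ_iff f i (by omega)).mpr h⟩

theorem isCAscentAt_zero_iff {n : ℕ} (hl : 1 ≤ l) (π : Perm (Fin n)) (h : 1 < n) :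
    IsCAscentAt a l k π 0 h ↔
      a - 1 ≤ (π ⟨0, by omega⟩ : ℕ) ∧ (π ⟨0, by omega⟩ : ℕ) + l ≤ π ⟨1, h⟩ ∧
        (π ⟨1, h⟩ : ℕ) + (k - (a + l)) < n := by
  simp only [IsCAscentAt, zero_add]
  set x := π ⟨0, by omega⟩
  set y := π ⟨1, h⟩
  have later (P : Fin n → Prop) [DecidablePred P] (hx : ¬ P x) (hy : ¬ P y) :
      #{t : Fin n | 1 < (t : ℕ) ∧ P (π t)} = #{t | P (π t)} := by
    refine congrArg card (filter_congr fun t _ => and_iff_right_of_imp fun ht => ?_)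
    by_contra hle
    obtain h0 | h1 : t = ⟨0, by omega⟩ ∨ t = ⟨1, h⟩ := by
      simp only [Fin.ext_iff]
      omega
    · exact hx (by rwa [h0] at ht)
    · exact hy (by rwa [h1] at ht)
  suffices hcounts : x < y → #{t : Fin n | 1 < (t : ℕ) ∧ π t < x} = x ∧
      #{t : Fin n | 1 < (t : ℕ) ∧ x < π t ∧ π t < y} = (y : ℕ) - x - 1 ∧
      #{t : Fin n | 1 < (t : ℕ) ∧ y < π t} = n - 1 - y by
    rw [Fin.lt_def]
    constructor
    · rintro ⟨hxy, hA, hB, hC⟩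
      obtain ⟨cA, cB, cC⟩ := hcounts hxy
      omega
    · rintro ⟨hA, hB, hC⟩
      have hxy : (x : ℕ) < y := by omega
      obtain ⟨cA, cB, cC⟩ := hcounts hxy
      exact ⟨hxy, by omega, by omega, by omega⟩
  intro hxy
  refine ⟨?_, ?_, ?_⟩
  · rw [later (· < x) (lt_irrefl x) (lt_asymm hxy), card_filter_perm_apply_lt]
  · rw [later (fun u => x < u ∧ u < y) (fun h => lt_irrefl x h.1) (fun h => lt_irrefl y h.2),
      card_filter_perm_apply_between]
  · rw [later (y < ·) (lt_asymm hxy) (lt_irrefl y), card_filter_perm_apply_gt]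

end Ascent

theorem hasCAscent_of_isOcc {a l k n : ℕ} {π : Perm (Fin n)} {σ : Perm (Fin k)} (h0 : 0 < k)
    (h1 : 1 < k) (hσ0 : (σ ⟨0, h0⟩ : ℕ) + 1 = a) (hσ1 : (σ ⟨1, h1⟩ : ℕ) + 1 = a + l)
    (hocc : IsOcc π σ (fun j => j = 0)) : HasCAscent a l k π := by
  obtain ⟨ι, hι, hadj, hord⟩ := hocc
  set s0 : Fin k := ⟨0, h0⟩
  set s1 : Fin k := ⟨1, h1⟩
  have hi1 : (ι s1 : ℕ) = ι s0 + 1 := hadj 0 h1 rfl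
  have h01 : σ s0 < σ s1 := by
    have : σ s0 ≠ σ s1 := σ.injective.ne (by simp [s0, s1, Fin.ext_iff])
    rw [Ne, Fin.ext_iff] at this
    rw [Fin.lt_def]
    omega
  have count (I : Finset (Fin k)) (P : Fin n → Prop) [DecidablePred P] (h0I : σ s0 ∉ I)
      (h1I : σ s1 ∉ I) (hP : ∀ s, σ s ∈ I → P (π (ι s))) :
      #I ≤ #{t : Fin n | (ι s0 : ℕ) + 1 < t ∧ P (π t)} := by
    rw [← card_filter_perm_apply_mem σ I]
    refine card_le_card_of_injOn ι (fun s hs => ?_) hι.injective.injOn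
    simp only [coe_filter, mem_univ, true_and, Set.mem_ofPred_eq] at hs ⊢
    have hs1 : s1 < s := by
      have : s ≠ s0 := fun h => h0I (h ▸ hs)
      have : s ≠ s1 := fun h => h1I (h ▸ hs)
      simp only [Fin.lt_def, ne_eq, Fin.ext_iff, s0, s1] at *
      omega
    exact ⟨hi1 ▸ hι hs1, hP s hs⟩
  have e1 : (⟨ι s0 + 1, by omega⟩ : Fin n) = ι s1 := Fin.ext hi1.symm
  refine ⟨ι s0, by omega, ?_⟩
  simp only [IsCAscentAt, e1, Fin.eta]
  refine ⟨(hord _ _).mp h01, ?_, ?_, ?_⟩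
  · calc a - 1 = #(Iio (σ s0)) := by simp; omega
      _ ≤ _ := count _ (· < π (ι s0)) (by simp) (by simp [h01.not_gt])
          fun s hs => (hord _ _).mp (by simpa using hs)
  · calc l - 1 = #(Ioo (σ s0) (σ s1)) := by simp; omega
      _ ≤ _ := count _ (fun u => π (ι s0) < u ∧ u < π (ι s1)) (by simp) (by simp)
          fun s hs => by simpa [hord] using hs
  · calc k - (a + l) = #(Ioi (σ s1)) := by simp; omega
      _ ≤ _ := count _ (π (ι s1) < ·) (by simp [h01.not_gt]) (by simp)
          fun s hs => (hord _ _).mp (by simpa using hs)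

theorem not_avoidsC_of_occ_positions {a l k n : ℕ} (ha : 1 ≤ a) {π : Perm (Fin n)}
    (h0 : 0 < k) (h1 : 1 < k) {ι : Fin k → Fin n} (hι : StrictMono ι)
    (hadj : (ι ⟨1, h1⟩ : ℕ) = ι ⟨0, h0⟩ + 1)
    (hA : #{s | π (ι s) < π (ι ⟨0, h0⟩)} = a - 1)
    (hB : #{s | π (ι s) < π (ι ⟨1, h1⟩)} = a + l - 1) : ¬ AvoidsC a l k π := by
  obtain ⟨σ, hσ⟩ := exists_perm_lt_iff_lt (π.injective.comp hι.injective)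
  intro hav
  refine hav σ h0 h1 ?_ ?_ ⟨ι, hι, fun j hj (hj0 : j = 0) => by subst hj0; exact hadj, hσ⟩
  · rw [val_eq_card_filter_lt hσ]
    simp only [Function.comp_apply, hA]
    omega
  · rw [val_eq_card_filter_lt hσ]
    simp only [Function.comp_apply, hB]
    omega

theorem not_avoidsC_of_hasCAscent {a l k n : ℕ} (ha : 1 ≤ a) (hl : 1 ≤ l) (hak : a + l ≤ k)
    {π : Perm (Fin n)} (h : HasCAscent a l k π) : ¬ AvoidsC a l k π := by
  obtain ⟨i, hi, hxy, hA, hB, hC⟩ := h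
  set p0 : Fin n := ⟨i, by omega⟩
  set p1 : Fin n := ⟨i + 1, hi⟩
  have hp01 : p0 < p1 := Fin.lt_def.2 i.lt_succ_self
  obtain ⟨S1, hS1, hS1card⟩ := exists_subset_card_eq hA
  obtain ⟨S2, hS2, hS2card⟩ := exists_subset_card_eq hB
  obtain ⟨S3, hS3, hS3card⟩ := exists_subset_card_eq hC
  replace hS1 : ∀ t ∈ S1, p1 < t ∧ π t < π p0 :=
    fun t ht => (mem_filter.1 (hS1 ht)).2
  replace hS2 : ∀ t ∈ S2, p1 < t ∧ π p0 < π t ∧ π t < π p1 :=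
    fun t ht => (mem_filter.1 (hS2 ht)).2
  replace hS3 : ∀ t ∈ S3, p1 < t ∧ π p1 < π t :=
    fun t ht => (mem_filter.1 (hS3 ht)).2
  have h12 : Disjoint S1 S2 :=
    disjoint_left.2 fun t h1 h2 => (hS1 t h1).2.not_gt (hS2 t h2).2.1
  have h13 : Disjoint S1 S3 :=
    disjoint_left.2 fun t h1 h3 => ((hS1 t h1).2.trans hxy).not_gt (hS3 t h3).2
  have h23 : Disjoint S2 S3 :=
    disjoint_left.2 fun t h2 h3 => (hS2 t h2).2.2.not_gt (hS3 t h3).2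
  set U := S1 ∪ S2 ∪ S3
  have hU : ∀ u ∈ U, p1 < u := by
    simp only [U, mem_union]
    rintro u ((h | h) | h)
    exacts [(hS1 u h).1, (hS2 u h).1, (hS3 u h).1]
  have hUcard : #U + 2 = k := by
    rw [card_union_of_disjoint (disjoint_union_left.2 ⟨h13, h23⟩), card_union_of_disjoint h12]
    omega
  obtain ⟨ι, hι, hι0, hι1, himage⟩ :=
    exists_strictMono_image_eq_insert_insert hp01 hU hUcard
  refine not_avoidsC_of_occ_positions ha (by omega) (by omega) hι (by rw [hι0, hι1]) ?_ ?_
  · rw [hι0, card_filter_comp_eq_card_filter_image hι.injective (π · < π p0), himage,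
      filter_insert, if_neg (lt_irrefl _), filter_insert, if_neg hxy.not_gt, filter_union,
      filter_union, filter_true_of_mem fun t ht => (hS1 t ht).2,
      filter_false_of_mem fun t ht => (hS2 t ht).2.1.not_gt,
      filter_false_of_mem fun t ht => (hxy.trans (hS3 t ht).2).not_gt, union_empty, union_empty,
      hS1card]
  · rw [hι1, card_filter_comp_eq_card_filter_image hι.injective (π · < π p1), himage,
      filter_insert, if_pos hxy, filter_insert, if_neg (lt_irrefl _), filter_union,
      filter_union, filter_true_of_mem fun t ht => (hS1 t ht).2.trans hxy,
      filter_true_of_mem fun t ht => (hS2 t ht).2.2,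
      filter_false_of_mem fun t ht => (hS3 t ht).2.not_gt, union_empty,
      card_insert_of_notMem fun h => (hU p0 (subset_union_left h)).not_gt hp01,
      card_union_of_disjoint h12, hS1card, hS2card]
    omega

theorem avoidsC_iff_not_hasCAscent {a l k n : ℕ} (ha : 1 ≤ a) (hl : 1 ≤ l) (hak : a + l ≤ k)
    (π : Perm (Fin n)) : AvoidsC a l k π ↔ ¬ HasCAscent a l k π :=
  ⟨fun hav h => not_avoidsC_of_hasCAscent ha hl hak h hav,
    fun h _ h0 h1 hσ0 hσ1 hocc => h (hasCAscent_of_isOcc h0 h1 hσ0 hσ1 hocc)⟩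

section ConsPerm

variable {m : ℕ} (j : Fin (m + 1)) (τ : Perm (Fin m))

noncomputable def consPerm : Perm (Fin (m + 1)) :=
  Equiv.ofBijective (Fin.cons j (j.succAbove ∘ τ)) <| Finite.injective_iff_bijective.mp <|
    Fin.cons_injective_iff.mpr
      ⟨fun ⟨v, hv⟩ => Fin.succAbove_ne j (τ v) hv, Fin.succAbove_right_injective.comp τ.injective⟩

@[simp] theorem consPerm_zero : consPerm j τ 0 = j := by
  simp [consPerm]

@[simp] theorem consPerm_succ (w : Fin m) : consPerm j τ w.succ = j.succAbove (τ w) := by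
  simp [consPerm]

theorem consPerm_comp_succ : ⇑(consPerm j τ) ∘ Fin.succ = j.succAbove ∘ τ :=
  funext (consPerm_succ j τ)

variable (m) in
theorem consPerm_bijective :
    Function.Bijective fun p : Fin (m + 1) × Perm (Fin m) => consPerm p.1 p.2 := by
  rw [Fintype.bijective_iff_injective_and_card]
  refine ⟨fun ⟨j, τ⟩ ⟨j', τ'⟩ h => ?_, by simp [Fintype.card_perm, Nat.factorial_succ]⟩
  obtain rfl : j = j' := by simpa using congrArg (· 0) h
  have : τ = τ' := Equiv.ext fun w => by simpa using congrArg (· w.succ) h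
  rw [this]

end ConsPerm

def IsCBadPair (a l k : ℕ) {m : ℕ} (j : Fin (m + 1)) (v : Fin m) : Prop :=
  a - 1 ≤ (j : ℕ) ∧ (j : ℕ) + l ≤ v + 1 ∧ (v : ℕ) + (k - (a + l)) < m

instance {a l k m : ℕ} (j : Fin (m + 1)) (v : Fin m) : Decidable (IsCBadPair a l k j v) :=
  inferInstanceAs (Decidable (_ ∧ _ ∧ _))

theorem hasCAscent_consPerm_iff {a l k m : ℕ} (hl : 1 ≤ l) (j : Fin (m + 2))
    (τ : Perm (Fin (m + 1))) :
    HasCAscent a l k (consPerm j τ) ↔ IsCBadPair a l k j (τ 0) ∨ HasCAscent a l k τ := by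
  rw [hasCAscent_iff, consPerm_comp_succ, hasCAscent_comp_iff (Fin.strictMono_succAbove j)]
  have e1 : consPerm j τ ⟨1, by omega⟩ = j.succAbove (τ 0) := consPerm_succ j τ 0
  rw [exists_prop_of_true (by omega), isCAscentAt_zero_iff hl]
  simp only [Fin.zero_eta, consPerm_zero, e1, Fin.val_succAbove, IsCBadPair]
  refine or_congr_left ?_
  split_ifs <;> omega

theorem card_filter_apply_zero_eq {m : ℕ} (S : Finset (Perm (Fin (m + 1)))) (j : Fin (m + 1)) :
    #{π ∈ S | π 0 = j} = #{τ : Perm (Fin m) | consPerm j τ ∈ S} := by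
  symm
  refine card_bij (fun τ _ => consPerm j τ) (fun τ hτ => by simpa using hτ) ?_ ?_
  · intro τ _ τ' _ h
    simpa using (consPerm_bijective m).1 (a₁ := (j, τ)) (a₂ := (j, τ')) h
  · intro π hπ
    obtain ⟨⟨j', τ⟩, rfl⟩ := (consPerm_bijective m).2 π
    obtain ⟨hS, rfl⟩ : consPerm j' τ ∈ S ∧ j' = j := by simpa using hπ
    exact ⟨τ, by simpa using hS, rfl⟩

section Counting

variable (a l k : ℕ)

open Classical in
noncomputable def cAvoiders (n : ℕ) : Finset (Perm (Fin n)) :=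
  {π | ¬ HasCAscent a l k π}

noncomputable def firstLetterCount (m : ℕ) (j : Fin (m + 1)) : ℕ :=
  #{π ∈ cAvoiders a l k (m + 1) | π 0 = j}

variable {a l k}

theorem mem_cAvoiders {n : ℕ} {π : Perm (Fin n)} :
    π ∈ cAvoiders a l k n ↔ ¬ HasCAscent a l k π := by
  simp [cAvoiders]

theorem card_cAvoiders_succ (m : ℕ) :
    #(cAvoiders a l k (m + 1)) = ∑ j, firstLetterCount a l k m j :=
  card_eq_sum_card_fiberwise (by simp)

theorem firstLetterCount_succ (hl : 1 ≤ l) {m : ℕ} (j : Fin (m + 2)) :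
    firstLetterCount a l k (m + 1) j =
      ∑ v ∈ {v | ¬ IsCBadPair a l k j v}, firstLetterCount a l k m v := by
  rw [firstLetterCount, card_filter_apply_zero_eq,
    card_eq_sum_card_fiberwise (f := fun τ => τ 0) (t := {v | ¬ IsCBadPair a l k j v}) ?maps]
  · refine sum_congr rfl fun v hv => congrArg card (Finset.ext fun τ => ?_)
    simp only [mem_filter, mem_univ, true_and, mem_cAvoiders, hasCAscent_consPerm_iff hl,
      not_or] at hv ⊢
    constructor
    · rintro ⟨⟨-, hτ⟩, rfl⟩
      exact ⟨hτ, rfl⟩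
    · rintro ⟨hτ, rfl⟩
      exact ⟨⟨hv, hτ⟩, rfl⟩
  · intro τ hτ
    simp only [coe_filter, mem_univ, true_and, Set.mem_ofPred_eq, mem_cAvoiders,
      hasCAscent_consPerm_iff hl, not_or] at hτ ⊢
    exact hτ.1

theorem isCBadPair_iff_sub (ha : 1 ≤ a) (hl : 1 ≤ l) (hak : a + l ≤ k) {m : ℕ} (j : Fin (m + 2))
    (v : Fin (m + 1)) : IsCBadPair a l k j v ↔
      IsCBadPair 1 l k (j - Fin.ofNat _ (a - 1)) (v - Fin.ofNat _ (a - 1)) := by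
  by_cases hk : k ≤ m + 2
  · rw [IsCBadPair, IsCBadPair, Fin.val_sub_ofNat j (by omega), Fin.val_sub_ofNat v (by omega)]
    split_ifs <;> omega
  · constructor <;> rintro ⟨h1, h2, h3⟩ <;> omega

theorem firstLetterCount_eq_sub (ha : 1 ≤ a) (hl : 1 ≤ l) (hak : a + l ≤ k) :
    ∀ (m : ℕ) (j : Fin (m + 1)),
      firstLetterCount a l k m j = firstLetterCount 1 l k m (j - Fin.ofNat _ (a - 1))
  | 0, j => by
    rw [Subsingleton.elim (α := Fin 1) (j - _) j]
    simp only [firstLetterCount, cAvoiders, not_hasCAscent_of_le_one le_rfl]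
  | m + 1, j => by
    rw [firstLetterCount_succ hl, firstLetterCount_succ hl]
    exact sum_equiv (Equiv.subRight (Fin.ofNat _ (a - 1)))
      (fun v => by simp [isCBadPair_iff_sub ha hl hak])
      (fun v _ => firstLetterCount_eq_sub ha hl hak m v)

theorem card_cAvoiders_eq (ha : 1 ≤ a) (hl : 1 ≤ l) (hak : a + l ≤ k) :
    ∀ n, #(cAvoiders a l k n) = #(cAvoiders 1 l k n)
  | 0 => by simp only [cAvoiders, not_hasCAscent_of_le_one (Nat.zero_le 1)]
  | m + 1 => by
    simp only [card_cAvoiders_succ, firstLetterCount_eq_sub ha hl hak m]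
    exact Equiv.sum_comp (Equiv.subRight (Fin.ofNat _ (a - 1))) _

end Counting

theorem cC_eq_card_cAvoiders {a l k : ℕ} (ha : 1 ≤ a) (hl : 1 ≤ l) (hak : a + l ≤ k) (n : ℕ) :
    cC a l k n = #(cAvoiders a l k n) := by
  rw [cC, ← Nat.card_eq_finsetCard]
  exact Nat.card_congr <| Equiv.subtypeEquivRight fun π =>
    (avoidsC_iff_not_hasCAscent ha hl hak π).trans mem_cAvoiders.symm

/-- For all `1 ≤ a ≤ k - l` and all `n ≥ 0`, the number of `C_{a,l}^k`-avoiding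
permutations in `S_n` equals the number of `C_{1,l}^k`-avoiding permutations in `S_n`. -/
theorem cC_indep_of_a (a l k n : ℕ) (hl : 1 ≤ l) (ha : 1 ≤ a) (hak : a ≤ k - l) :
    cC a l k n = cC 1 l k n := by
  have hak' : a + l ≤ k := by omega
  rw [cC_eq_card_cAvoiders ha hl hak', cC_eq_card_cAvoiders le_rfl hl (by omega)]
  exact card_cAvoiders_eq ha hl hak' n
end

section
/- The number c(n) of permutations of [n] avoiding the generalized pattern 12-3 satisfies the recurrence c(n-1) = Σ_{j=0}^{n-1} (-1)^{n-1-j} · binom(n-1, j) · c(j+1) for all n ≥ 3; equivalently, c(n) equals the n-th Bell number. -/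
/-- The Bell numbers: `bell n` is the number of set partitions of `[n]`. -/
def bell : ℕ → ℕ
  | 0 => 1
  | n + 1 => ∑ k ∈ (Finset.range (n + 1)).attach, Nat.choose n k * bell k
decreasing_by
  have := Finset.mem_range.mp k.2; omega

/-- `π` contains an occurrence of the generalized pattern `12-3`:
an index `i` with `i + 1 < j ≤ n` and `π i < π (i+1) < π j`. -/
def Occ12_3 {n : ℕ} (π : Equiv.Perm (Fin n)) : Prop :=
  ∃ i j : Fin n, ∃ hi : (i : ℕ) + 1 < n,
    (i : ℕ) + 1 < (j : ℕ) ∧ π i < π ⟨(i : ℕ) + 1, hi⟩ ∧ π ⟨(i : ℕ) + 1, hi⟩ < π j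

/-- `c(n)`: the number of permutations of `[n]` avoiding `12-3`. -/
noncomputable def c12_3 (n : ℕ) : ℕ :=
  Nat.card {π : Equiv.Perm (Fin n) // ¬ Occ12_3 π}

/-!
Split a permutation at its largest entry `m`, as `d ++ m :: t`. Every entry is smaller than `m`,
so `m` can only play the role of the `3` in an occurrence of `12-3`; hence the permutation avoids
`12-3` exactly when `d` is decreasing and `t` avoids `12-3`. A decreasing `d` is determined by its
set of entries, so choosing the entries of `t` gives `c(n+1) = ∑ₖ C(n,k) c(k)`, the recurrence of
the Bell numbers. Counting arrangements of an arbitrary finite subset of a linear order, instead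
of `[n]`, lets this recursion close without relabelling. The alternating identity is binomial
inversion of that recurrence, read off from the iterated forward differences of `x ↦ C(x,k)`.
-/

open Finset

namespace List

section LT

variable {α : Type*} [LT α]

def Has12_3 : List α → Prop
  | a :: b :: l => (a < b ∧ ∃ c ∈ l, b < c) ∨ Has12_3 (b :: l)
  | _ => False

theorem has12_3_iff_getElem : ∀ {l : List α}, l.Has12_3 ↔
    ∃ i j, ∃ (_ : i + 1 < j) (hj : j < l.length), l[i] < l[i + 1] ∧ l[i + 1] < l[j]
  | [] => by simp [Has12_3]
  | [_] => iff_of_false id fun ⟨_, _, hij, hj, _⟩ => by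
    have := hj.trans_eq length_singleton
    omega
  | a :: b :: l => by
    rw [Has12_3, has12_3_iff_getElem]
    constructor
    · rintro (⟨hab, c, hc, hbc⟩ | ⟨i, j, hij, hj, h⟩)
      · obtain ⟨k, hk, rfl⟩ := getElem_of_mem hc
        exact ⟨0, k + 2, by omega, by simpa, hab, hbc⟩
      · exact ⟨i + 1, j + 1, by omega, by simpa using hj, h⟩
    · rintro ⟨_ | i, j, hij, hj, h⟩
      · obtain ⟨k, rfl⟩ : ∃ k, j = k + 2 := ⟨j - 2, by omega⟩
        exact .inl ⟨h.1, _, getElem_mem .., h.2⟩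
      · obtain ⟨k, rfl⟩ : ∃ k, j = k + 1 := ⟨j - 1, by omega⟩
        exact .inr ⟨i, k, by omega, by simpa using hj, h⟩

end LT

theorem has12_3_cons_iff_of_forall_lt {α : Type*} [Preorder α] {m : α} {t : List α}
    (ht : ∀ x ∈ t, x < m) : (m :: t).Has12_3 ↔ t.Has12_3 := by
  match t, ht with
  | [], _ => simp [Has12_3]
  | b :: t, ht => simp [Has12_3, (ht b mem_cons_self).not_gt]

theorem has12_3_append_cons_iff {α : Type*} [LinearOrder α] {m : α} {t : List α}
    (ht : ∀ x ∈ t, x < m) :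
    ∀ {d : List α}, (∀ x ∈ d, x < m) → ((d ++ m :: t).Has12_3 ↔ ¬ d.SortedGE ∨ t.Has12_3)
  | [], _ => by simp [has12_3_cons_iff_of_forall_lt ht, sortedGE_iff_isChain]
  | [_], _ => by
    have : ¬ ∃ c ∈ t, m < c := fun ⟨c, hc, hmc⟩ => (ht c hc).asymm hmc
    simp [Has12_3, has12_3_cons_iff_of_forall_lt ht, sortedGE_iff_isChain, this]
  | a :: b :: d, hd => by
    have ih := has12_3_append_cons_iff ht (d := b :: d) fun x hx => hd x (.tail a hx)
    rw [cons_append, cons_append, Has12_3, ← cons_append, ih]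
    simp only [sortedGE_iff_isChain, isChain_cons_cons]
    have : ∃ c ∈ d ++ m :: t, b < c := ⟨m, by simp, hd b (by simp)⟩
    simp only [this, and_true, not_and_or, not_le]
    tauto

end List

theorem bell_succ (n : ℕ) :
    bell (n + 1) = ∑ k ∈ range (n + 1), n.choose k * bell k := by
  rw [bell]
  exact sum_attach (range (n + 1)) fun k => n.choose k * bell k

section Avoiders

variable {α : Type*} [LinearOrder α]

open Classical in
noncomputable def avoiders12_3 (s : Finset α) : Finset (List α) :=
  {l ∈ s.val.lists.toFinset | ¬ l.Has12_3}

theorem mem_avoiders12_3 {s : Finset α} {l : List α} :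
    l ∈ avoiders12_3 s ↔ (l.Nodup ∧ l.toFinset = s) ∧ ¬ l.Has12_3 := by
  classical
  rw [avoiders12_3, mem_filter, Multiset.mem_toFinset, Multiset.mem_lists_iff]
  refine and_congr_left' ⟨fun h => ?_, fun ⟨hl, hs⟩ => ?_⟩
  · have hl : l.Nodup := Multiset.coe_nodup.1 (h ▸ s.nodup :)
    exact ⟨hl, Finset.ext fun x => by simp [← Finset.mem_val, h]⟩
  · rw [← hs, List.toFinset_val, hl.dedup]
    rfl

theorem sort_ge_append_cons_mem_avoiders12_3 {s t : Finset α} {m : α} (hm : ∀ x ∈ s, x < m)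
    (hts : t ⊆ s) {u : List α} (hu : u ∈ avoiders12_3 t) :
    (s \ t).sort (· ≥ ·) ++ m :: u ∈ avoiders12_3 (insert m s) := by
  rw [mem_avoiders12_3] at hu ⊢
  obtain ⟨⟨hnd, rfl⟩, havoid⟩ := hu
  have hus : ∀ x ∈ u, x ∈ s := fun x hx => hts (List.mem_toFinset.2 hx)
  have hds : ∀ x ∈ (s \ u.toFinset).sort (· ≥ ·), x ∈ s ∧ x ∉ u := fun x hx => by
    simpa using (mem_sort _).1 hx
  refine ⟨⟨?_, ?_⟩, ?_⟩
  · rw [List.nodup_middle, List.nodup_cons, List.nodup_append]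
    refine ⟨fun h => (hm m ?_).false, sort_nodup _ _, hnd,
      fun a ha b hb hab => (hds a ha).2 (hab ▸ hb)⟩
    rcases List.mem_append.1 h with h | h
    exacts [(hds m h).1, hus m h]
  · ext x
    simp only [List.toFinset_append, List.toFinset_cons, sort_toFinset, mem_union, mem_insert,
      mem_sdiff, List.mem_toFinset]
    have := hus x
    grind
  · rw [List.has12_3_append_cons_iff (fun x hx => hm x (hus x hx))
      (fun x hx => hm x (hds x hx).1)]
    exact not_or.2 ⟨not_not.2 (sortedGT_sort _).sortedGE, havoid⟩

theorem exists_sort_ge_append_cons_eq {s : Finset α} {m : α} (hm : ∀ x ∈ s, x < m)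
    {l : List α} (hl : l ∈ avoiders12_3 (insert m s)) :
    ∃ t ⊆ s, ∃ u ∈ avoiders12_3 t, (s \ t).sort (· ≥ ·) ++ m :: u = l := by
  rw [mem_avoiders12_3] at hl
  obtain ⟨⟨hnd, hfin⟩, havoid⟩ := hl
  obtain ⟨d, u, rfl⟩ := List.append_of_mem (List.mem_toFinset.1 (hfin ▸ mem_insert_self m s))
  rw [List.nodup_middle, List.nodup_cons, List.nodup_append] at hnd
  obtain ⟨hm_notMem, hd_nodup, hu_nodup, hdu⟩ := hnd
  have hmem : ∀ x, x ∈ d ∨ x ∈ u ↔ x ∈ s := fun x => by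
    have hx := congrArg (x ∈ ·) hfin
    simp only [List.toFinset_append, List.toFinset_cons, mem_union, mem_insert,
      List.mem_toFinset, eq_iff_iff] at hx
    have hs : x ∈ s → x ≠ m := fun h e => (hm x h).ne e
    have hdu : x ∈ d ∨ x ∈ u → x ≠ m := fun h e => hm_notMem (e ▸ List.mem_append.2 h)
    tauto
  rw [List.has12_3_append_cons_iff (fun x hx => hm x ((hmem x).1 (.inr hx)))
    (fun x hx => hm x ((hmem x).1 (.inl hx))), not_or, not_not] at havoid
  have hd : d = (s \ u.toFinset).sort (· ≥ ·) := by
    refine List.Perm.eq_of_sortedGE havoid.1 (sortedGT_sort _).sortedGE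
      (List.perm_of_nodup_nodup_toFinset_eq hd_nodup (sort_nodup _ _) ?_)
    ext x
    simp only [List.mem_toFinset, mem_sort, mem_sdiff, ← hmem]
    exact ⟨fun hx => ⟨.inl hx, fun hxu => hdu x hx x hxu rfl⟩, fun h => h.1.resolve_right h.2⟩
  exact ⟨u.toFinset, fun x hx => (hmem x).1 (.inr (List.mem_toFinset.1 hx)), u,
    mem_avoiders12_3.2 ⟨⟨hu_nodup, rfl⟩, havoid.2⟩, hd ▸ rfl⟩

theorem card_avoiders12_3_insert {s : Finset α} {m : α} (hm : ∀ x ∈ s, x < m) :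
    #(avoiders12_3 (insert m s)) = ∑ t ∈ s.powerset, #(avoiders12_3 t) := by
  have hms : m ∉ s := fun h => (hm m h).false
  rw [← card_sigma, eq_comm]
  refine card_bij (fun p _ => (s \ p.1).sort (· ≥ ·) ++ m :: p.2) (fun p hp => ?_)
    (fun p hp q hq h => ?_) (fun l hl => ?_)
  · rw [mem_sigma, mem_powerset] at hp
    exact sort_ge_append_cons_mem_avoiders12_3 hm hp.1 hp.2
  · rw [mem_sigma, mem_powerset, mem_avoiders12_3] at hp hq
    have hp2 : m ∉ p.2 := fun h => hms (hp.1 (hp.2.1.2 ▸ List.mem_toFinset.2 h))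
    obtain ⟨-, -, h⟩ := (List.append_cons_inj_of_notMem (by simp [hms]) hp2).1 h
    exact Sigma.ext (hp.2.1.2.symm.trans (h ▸ hq.2.1.2)) (heq_of_eq h)
  · obtain ⟨t, hts, u, hu, rfl⟩ := exists_sort_ge_append_cons_eq hm hl
    exact ⟨⟨t, u⟩, mem_sigma.2 ⟨mem_powerset.2 hts, hu⟩, rfl⟩

theorem avoiders12_3_empty : avoiders12_3 (∅ : Finset α) = {[]} := by
  ext l
  simp only [mem_avoiders12_3, List.toFinset_eq_empty_iff, mem_singleton]
  constructor
  · exact fun h => h.1.2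
  · rintro rfl
    exact ⟨⟨List.nodup_nil, rfl⟩, id⟩

theorem card_avoiders12_3 (s : Finset α) : #(avoiders12_3 s) = bell #s := by
  induction s using Finset.strongInduction with
  | H s ih =>
    rcases s.eq_empty_or_nonempty with rfl | hs
    · rw [avoiders12_3_empty, card_singleton, card_empty, bell]
    have hm : ∀ x ∈ s.erase (s.max' hs), x < s.max' hs := fun _ => s.lt_max'_of_mem_erase_max' hs
    rw [← insert_erase (s.max'_mem hs), card_avoiders12_3_insert hm,
      card_insert_of_notMem (notMem_erase _ _), bell_succ]
    refine (sum_congr rfl fun t ht => ih t ?_).trans ?_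
    · exact (mem_powerset.1 ht).trans_ssubset (erase_ssubset (s.max'_mem hs))
    · simpa using sum_powerset_apply_card bell (x := s.erase (s.max' hs))

end Avoiders

theorem occ12_3_iff_has12_3_ofFn {n : ℕ} (σ : Equiv.Perm (Fin n)) :
    Occ12_3 σ ↔ (List.ofFn σ).Has12_3 := by
  rw [List.has12_3_iff_getElem]
  constructor
  · rintro ⟨i, j, hi, hij, h⟩
    exact ⟨i, j, hij, by simp, by simpa using h⟩
  · rintro ⟨i, j, hij, hj, h⟩
    have hjn : j < n := by simpa using hj
    exact ⟨⟨i, by omega⟩, ⟨j, hjn⟩, (by omega : i + 1 < n), hij, by simpa using h⟩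

theorem c12_3_eq_card_avoiders12_3 (n : ℕ) :
    c12_3 n = #(avoiders12_3 (univ : Finset (Fin n))) := by
  classical
  rw [c12_3, Nat.card_eq_fintype_card, Fintype.card_subtype]
  refine card_bij (fun σ _ => List.ofFn σ) (fun σ hσ => ?_)
    (fun σ _ τ _ h => Equiv.ext (congrFun (List.ofFn_injective h))) (fun l hl => ?_)
  · rw [mem_filter, occ12_3_iff_has12_3_ofFn] at hσ
    have hfin : (List.ofFn σ).toFinset = univ :=
      eq_univ_of_forall fun x => by simpa using σ.surjective x
    exact mem_avoiders12_3.2 ⟨⟨List.nodup_ofFn.2 σ.injective, hfin⟩, hσ.2⟩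
  · rw [mem_avoiders12_3] at hl
    obtain ⟨⟨hnd, hfin⟩, havoid⟩ := hl
    have hmem : ∀ x, x ∈ l := fun x => List.mem_toFinset.1 (hfin ▸ mem_univ x)
    have hlen : l.length = n := by
      simpa using Fintype.card_congr (hnd.getEquivOfForallMemList l hmem)
    let σ := (finCongr hlen).symm.trans (hnd.getEquivOfForallMemList l hmem)
    have hσ : List.ofFn σ = l := List.ext_getElem (by simp [hlen]) fun i _ _ => by simp [σ]
    refine ⟨σ, mem_filter.2 ⟨mem_univ _, ?_⟩, hσ⟩
    rwa [occ12_3_iff_has12_3_ofFn, hσ]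

theorem c12_3_eq_bell (n : ℕ) : c12_3 n = bell n := by
  rw [c12_3_eq_card_avoiders12_3, card_avoiders12_3, card_univ, Fintype.card_fin]

theorem binomial_inversion (b : ℕ → ℤ) (m : ℕ) :
    ∑ j ∈ range (m + 1), (-1) ^ (m - j) * (m.choose j : ℤ) *
      ∑ k ∈ range (j + 1), (j.choose k : ℤ) * b k = b m := by
  set g : ℕ → ℤ := ∑ k ∈ range (m + 1), b k • fun x ↦ (x.choose k : ℤ)
  have hg : ∀ j ∈ range (m + 1), ∑ k ∈ range (j + 1), (j.choose k : ℤ) * b k = g j := by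
    intro j hj
    simp only [g, Finset.sum_apply, Pi.smul_apply, smul_eq_mul, mul_comm (b _)]
    refine sum_subset (range_subset_range.2 (by simpa using hj)) fun k _ hk => ?_
    simp [Nat.choose_eq_zero_of_lt (by simpa using hk : j < k)]
  calc _ = ∑ j ∈ range (m + 1), ((-1) ^ (m - j) * (m.choose j : ℤ)) • g (0 + j • 1) := by
        refine sum_congr rfl fun j hj => ?_
        simp [hg j hj]
    _ = (fwdDiff 1)^[m] g 0 := (fwdDiff_iter_eq_sum_shift 1 g m 0).symm
    _ = b m := by
        simp only [g, fwdDiff_iter_finsetSum, fwdDiff_iter_const_smul, Finset.sum_apply,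
          Pi.smul_apply, fwdDiff_iter_choose_zero, smul_ite, smul_zero]
        simp

/-- The number `c(n)` of `12-3`-avoiding permutations satisfies
`c(n-1) = Σ_{j=0}^{n-1} (-1)^{n-1-j}·binom(n-1, j)·c(j+1)` for all `n ≥ 3`;
equivalently, `c(n)` equals the `n`-th Bell number. -/
theorem c12_3_rec_and_bell :
    (∀ n : ℕ, 3 ≤ n →
      (c12_3 (n - 1) : ℤ) = ∑ j ∈ Finset.range n,
        (-1 : ℤ) ^ (n - 1 - j) * Nat.choose (n - 1) j * c12_3 (j + 1)) ∧
    (∀ n : ℕ, c12_3 n = bell n) := by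
  refine ⟨fun n hn => ?_, c12_3_eq_bell⟩
  obtain ⟨m, rfl⟩ : ∃ m, n = m + 1 := ⟨n - 1, by omega⟩
  simp only [c12_3_eq_bell, Nat.add_sub_cancel, bell_succ, Nat.cast_sum, Nat.cast_mul]
  exact (binomial_inversion (fun k => bell k) m).symm
end

section
/- Let 1 ≤ a and a+l-1 ≤ k. If a ≤ i_j ≤ n-k+l+a-1 for all j = 1,…,l, then there is no P_{a,l}^k-avoiding permutation of [n] beginning with i_1,…,i_l; i.e., p_{a,l}^k(n;i_1,…,i_l) = 0 (assuming n ≥ k and the i_j are distinct). -/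
open Finset

/-- `π` avoids every pattern in `P_{a,l}^k` (first `l` letters a permutation of
`{a, …, a+l-1}`, matched to consecutive positions); values are `1`-based. -/
def AvoidsP (a l k : ℕ) {n : ℕ} (π : Equiv.Perm (Fin n)) : Prop :=
  ∀ σ : Equiv.Perm (Fin k),
    (∀ j : Fin k, (j : ℕ) < l → a ≤ (σ j : ℕ) + 1 ∧ (σ j : ℕ) + 1 ≤ a + l - 1) →
    ¬ IsOcc π σ (fun j => j + 1 < l)

/-- `p_{a,l}^k(n)`. -/
noncomputable def pP (a l k n : ℕ) : ℕ :=
  Nat.card {π : Equiv.Perm (Fin n) // AvoidsP a l k π}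

/-- `p_{a,l}^k(n; i₁, …, i_m)`: additionally the permutation begins with the
letters `v 0, v 1, …` (1-based values). -/
noncomputable def pPf (a l k n : ℕ) {m : ℕ} (v : Fin m → ℕ) : ℕ :=
  Nat.card {π : Equiv.Perm (Fin n) // AvoidsP a l k π ∧
    ∀ t : Fin m, ∀ ht : (t : ℕ) < n, (π ⟨t, ht⟩ : ℕ) + 1 = v t}

lemma fin_filter_card (n : ℕ) (p : ℕ → Prop) [DecidablePred p] :
    ((univ : Finset (Fin n)).filter fun x => p x.val).card = ((Finset.range n).filter p).card := by
  rw [← Finset.card_image_of_injective ((univ : Finset (Fin n)).filter fun x => p x.val)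
    Fin.val_injective]
  congr 1
  ext y
  simp only [Finset.mem_image, Finset.mem_filter, Finset.mem_univ, true_and, Finset.mem_range]
  constructor
  · rintro ⟨x, hx, rfl⟩; exact ⟨x.2, hx⟩
  · rintro ⟨hy, hp⟩; exact ⟨⟨y, hy⟩, hp, rfl⟩

lemma range_filter_lt_card (n m : ℕ) :
    ((Finset.range n).filter fun x => x < m).card = min m n := by
  have : (Finset.range n).filter (fun x => x < m) = Finset.range (min m n) := by
    ext x; simp; omega
  rw [this, Finset.card_range]

lemma range_filter_le_card (n c : ℕ) :
    ((Finset.range n).filter fun x => c ≤ x).card = n - c := by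
  have : (Finset.range n).filter (fun x => c ≤ x) = Finset.Ico c n := by
    ext x; simp [Finset.mem_Ico]; omega
  rw [this, Nat.card_Ico]

lemma strictMono_nat_le {k : ℕ} {f : Fin k → ℕ} (hf : StrictMono f) :
    ∀ j : ℕ, ∀ hj : j < k, j ≤ f ⟨j, hj⟩ := by
  intro j
  induction j with
  | zero => intro hj; exact Nat.zero_le _
  | succ m ih =>
    intro hj
    have h1 : f ⟨m, by omega⟩ < f ⟨m + 1, hj⟩ := hf (by simp [Fin.lt_def])
    have h2 := ih (by omega)
    omega

/-- Lemma 3.1(ii): if `n ≥ k` and `i₁, …, i_l` are distinct with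
`a ≤ i_t ≤ n - k + l + a - 1` for all `t`, then there is no `P_{a,l}^k`-avoiding
permutation of `[n]` beginning with `i₁, …, i_l`. -/
theorem pPf_prefix_zero (a l k n : ℕ) (v : Fin l → ℕ)
    (ha : 1 ≤ a) (hk : a + l - 1 ≤ k) (hn : k ≤ n)
    (hv : Function.Injective v)
    (hvr : ∀ t : Fin l, a ≤ v t ∧ v t ≤ n - k + l + a - 1) :
    pPf a l k n v = 0 := by
  classical
  rw [pPf, Nat.card_eq_zero]
  left
  constructor
  rintro ⟨π, havoid, hpre⟩
  set c : ℕ := n - k + l + a - 1 with hcdef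
  have hl : l ≤ k := by omega
  have hln : l ≤ n := le_trans hl hn
  -- middle-range property of the prefix positions
  have hmid : ∀ p : Fin n, (p : ℕ) < l →
      a - 1 ≤ (π p : ℕ) ∧ (π p : ℕ) + 1 ≤ c := by
    intro p hp
    have h1 := hpre ⟨(p : ℕ), hp⟩ p.2
    have h2 := hvr ⟨(p : ℕ), hp⟩
    simp only [Fin.eta] at h1
    omega
  -- the index set T
  set T : Finset (Fin n) :=
    univ.filter (fun p : Fin n => p.val < l ∨ ((π p).val < a - 1 ∨ c ≤ (π p).val)) with hTdef
  have hcn : c ≤ n := by omega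
  have hvalcard : ((univ : Finset (Fin n)).filter
      (fun y : Fin n => y.val < a - 1 ∨ c ≤ y.val)).card = a - 1 + (n - c) := by
    rw [Finset.filter_or]
    rw [Finset.card_union_of_disjoint]
    · rw [fin_filter_card n (fun x => x < a - 1), fin_filter_card n (fun x => c ≤ x),
        range_filter_lt_card, range_filter_le_card]
      omega
    · rw [Finset.disjoint_left]
      intro y hy1 hy2
      simp only [Finset.mem_filter] at hy1 hy2
      omega
  have hT : T.card = k := by
    rw [hTdef, Finset.filter_or, Finset.card_union_of_disjoint]
    · have e1 : ((univ : Finset (Fin n)).filter (fun p : Fin n => p.val < l)).card = l := by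
        rw [fin_filter_card n (fun x => x < l), range_filter_lt_card]
        omega
      have e2 : ((univ : Finset (Fin n)).filter
          (fun p : Fin n => (π p).val < a - 1 ∨ c ≤ (π p).val)).card = a - 1 + (n - c) := by
        have himg : (univ : Finset (Fin n)).filter (fun p : Fin n => (π p).val < a - 1 ∨ c ≤ (π p).val)
            = ((univ : Finset (Fin n)).filter
                (fun y : Fin n => y.val < a - 1 ∨ c ≤ y.val)).image π.symm := by
          ext p
          simp only [Finset.mem_filter, Finset.mem_image, Finset.mem_univ, true_and]
          constructor
          · intro h; exact ⟨π p, h, by simp⟩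
          · rintro ⟨y, hy, rfl⟩; simpa using hy
        rw [himg, Finset.card_image_of_injective _ π.symm.injective, hvalcard]
      rw [e1, e2]
      omega
    · rw [Finset.disjoint_left]
      intro p hp1 hp2
      simp only [Finset.mem_filter, Finset.mem_univ, true_and] at hp1 hp2
      have := hmid p hp1
      omega
  -- the position map
  set ι : Fin k ↪o Fin n := T.orderEmbOfFin hT with hιdef
  have hιmem : ∀ s, ι s ∈ T := fun s => T.orderEmbOfFin_mem hT s
  have hιmono : StrictMono (ι : Fin k → Fin n) := ι.strictMono
  -- prefix positions are fixed
  have hprefix : ∀ j : ℕ, ∀ hj : j < l,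
      ι ⟨j, lt_of_lt_of_le hj hl⟩ = ⟨j, lt_of_lt_of_le hj hln⟩ := by
    intro j
    induction j using Nat.strong_induction_on with
    | _ j IH =>
      intro hj
      have hjk : j < k := lt_of_lt_of_le hj hl
      have hjn : j < n := lt_of_lt_of_le hj hln
      have hmν : StrictMono (fun s : Fin k => (ι s : ℕ)) := fun x y h => hιmono h
      have hlow : j ≤ (ι ⟨j, hjk⟩ : ℕ) := strictMono_nat_le hmν j hjk
      have hmemT : (⟨j, hjn⟩ : Fin n) ∈ T := by
        rw [hTdef]; simp only [Finset.mem_filter, Finset.mem_univ, true_and]; left; exact hj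
      obtain ⟨s, hs⟩ : ∃ s, ι s = ⟨j, hjn⟩ := by
        have hr := T.range_orderEmbOfFin hT
        have : (⟨j, hjn⟩ : Fin n) ∈ Set.range (T.orderEmbOfFin hT) := by
          rw [hr]; exact_mod_cast hmemT
        obtain ⟨s, hs⟩ := this
        exact ⟨s, hs⟩
      have hhigh : (ι ⟨j, hjk⟩ : ℕ) ≤ j := by
        rcases lt_or_ge (s : ℕ) j with hsj | hsj
        · exfalso
          have hsl : (s : ℕ) < l := lt_trans hsj hj
          have := IH s hsj hsl
          have hseq : (⟨(s : ℕ), lt_of_lt_of_le hsl hl⟩ : Fin k) = s := Fin.ext rfl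
          rw [hseq, hs] at this
          have : j = (s : ℕ) := by
            have := congrArg Fin.val this
            simpa using this
          omega
        · have hle : (⟨j, hjk⟩ : Fin k) ≤ s := by
            rw [Fin.le_def]; exact hsj
          have := ι.monotone hle
          rw [hs] at this
          exact this
      exact Fin.ext (le_antisymm hhigh hlow)
  -- the value set
  set B : Finset (Fin n) := T.image π with hBdef
  have hB : B.card = k := by
    rw [hBdef, Finset.card_image_of_injective _ π.injective, hT]
  have hxB : ∀ s : Fin k, π (ι s) ∈ B := by
    intro s; rw [hBdef]; exact Finset.mem_image_of_mem π (hιmem s)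
  -- the rank function
  set rank : Fin k → ℕ := fun s => (B.filter fun y => y < π (ι s)).card with hrankdef
  have hrank_lt : ∀ s, rank s < k := by
    intro s
    have hsub : (B.filter fun y => y < π (ι s)) ⊆ B.erase (π (ι s)) := by
      intro y hy
      simp only [Finset.mem_filter] at hy
      exact Finset.mem_erase.2 ⟨ne_of_lt hy.2, hy.1⟩
    have := Finset.card_le_card hsub
    rw [Finset.card_erase_of_mem (hxB s), hB] at this
    have hk0 : 0 < k := by
      have := hxB s
      rw [← hB]
      exact Finset.card_pos.2 ⟨_, this⟩
    simp only [hrankdef]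
    omega
  have horder : ∀ s t : Fin k, π (ι s) < π (ι t) ↔ rank s < rank t := by
    have key : ∀ s t : Fin k, π (ι s) < π (ι t) → rank s < rank t := by
      intro s t hst
      apply Finset.card_lt_card
      rw [Finset.ssubset_iff_of_subset]
      · exact ⟨π (ι s), Finset.mem_filter.2 ⟨hxB s, hst⟩,
          fun hmem => absurd (Finset.mem_filter.1 hmem).2 (lt_irrefl _)⟩
      · intro y hy
        simp only [Finset.mem_filter] at hy ⊢
        exact ⟨hy.1, lt_trans hy.2 hst⟩
    intro s t
    constructor
    · exact key s t
    · intro hr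
      rcases lt_trichotomy (π (ι s)) (π (ι t)) with h | h | h
      · exact h
      · exfalso; rw [hrankdef] at hr; simp only [h] at hr; exact lt_irrefl _ hr
      · exact absurd (lt_trans hr (key t s h)) (lt_irrefl _)
  have hinj : Function.Injective (fun s : Fin k => (⟨rank s, hrank_lt s⟩ : Fin k)) := by
    intro s t hst
    have hre : rank s = rank t := by
      simpa [Fin.mk.injEq] using hst
    rcases lt_trichotomy (π (ι s)) (π (ι t)) with h | h | h
    · exact absurd ((horder s t).1 h) (by omega)
    · exact hιmono.injective (π.injective h)
    · exact absurd ((horder t s).1 h) (by omega)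
  set σ0 : Fin k → Fin k := fun s => (⟨rank s, hrank_lt s⟩ : Fin k) with hσ0def
  have hbij : Function.Bijective σ0 := Finite.injective_iff_bijective.1 hinj
  set σ : Equiv.Perm (Fin k) := Equiv.ofBijective σ0 hbij with hσdef
  have hσapp : ∀ s, σ s = σ0 s := fun s => rfl
  -- small values are all in B
  have hsmallB : ∀ y : Fin n, (y : ℕ) < a - 1 → y ∈ B := by
    intro y hy
    rw [hBdef]
    refine Finset.mem_image.2 ⟨π.symm y, ?_, by simp⟩
    rw [hTdef]
    simp only [Finset.mem_filter, Finset.mem_univ, true_and]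
    right; left
    simpa using hy
  have hbigB : ∀ y : Fin n, c ≤ (y : ℕ) → y ∈ B := by
    intro y hy
    rw [hBdef]
    refine Finset.mem_image.2 ⟨π.symm y, ?_, by simp⟩
    rw [hTdef]
    simp only [Finset.mem_filter, Finset.mem_univ, true_and]
    right; right
    simpa using hy
  -- bounds on the rank of prefix positions
  have hbound : ∀ j : Fin k, (j : ℕ) < l → a ≤ rank j + 1 ∧ rank j + 1 ≤ a + l - 1 := by
    intro j hj
    have hjn : (j : ℕ) < n := lt_of_lt_of_le hj hln
    have hιj : ι j = ⟨(j : ℕ), hjn⟩ := by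
      have := hprefix (j : ℕ) hj
      have he : (⟨(j : ℕ), lt_of_lt_of_le hj hl⟩ : Fin k) = j := Fin.ext rfl
      rw [he] at this
      exact this
    set x : Fin n := π (ι j) with hxdef
    have hx1 : a - 1 ≤ (x : ℕ) ∧ (x : ℕ) + 1 ≤ c := by
      rw [hxdef, hιj]
      exact hmid ⟨(j : ℕ), hjn⟩ hj
    constructor
    · -- lower bound
      have hsub : ((univ : Finset (Fin n)).filter fun y : Fin n => y.val < a - 1)
          ⊆ B.filter fun y => y < x := by
        intro y hy
        simp only [Finset.mem_filter, Finset.mem_univ, true_and] at hy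
        refine Finset.mem_filter.2 ⟨hsmallB y hy, ?_⟩
        rw [Fin.lt_def]
        omega
      have hcard : ((univ : Finset (Fin n)).filter fun y : Fin n => y.val < a - 1).card = a - 1 := by
        rw [fin_filter_card n (fun y => y < a - 1), range_filter_lt_card]
        omega
      have := Finset.card_le_card hsub
      rw [hcard] at this
      simp only [hrankdef]
      rw [← hxdef]
      omega
    · -- upper bound
      set big : Finset (Fin n) := (univ : Finset (Fin n)).filter fun y : Fin n => c ≤ y.val with hbigdef
      have hbigcard : big.card = n - c := by
        rw [hbigdef, fin_filter_card n (fun y => c ≤ y), range_filter_le_card]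
      have hsub : (B.filter fun y => y < x) ∪ insert x big ⊆ B := by
        intro y hy
        rcases Finset.mem_union.1 hy with hy | hy
        · exact (Finset.mem_filter.1 hy).1
        · rcases Finset.mem_insert.1 hy with rfl | hy
          · exact hxB j
          · simp only [hbigdef, Finset.mem_filter, Finset.mem_univ, true_and] at hy
            exact hbigB y hy
      have hdisj : Disjoint (B.filter fun y => y < x) (insert x big) := by
        rw [Finset.disjoint_left]
        intro y hy1 hy2
        simp only [Finset.mem_filter] at hy1
        rcases Finset.mem_insert.1 hy2 with rfl | hy2
        · exact absurd hy1.2 (lt_irrefl _)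
        · simp only [hbigdef, Finset.mem_filter, Finset.mem_univ, true_and] at hy2
          have := hy1.2
          rw [Fin.lt_def] at this
          omega
      have hxnotbig : x ∉ big := by
        simp only [hbigdef, Finset.mem_filter, Finset.mem_univ, true_and]
        omega
      have := Finset.card_le_card hsub
      rw [Finset.card_union_of_disjoint hdisj, Finset.card_insert_of_notMem hxnotbig,
        hbigcard, hB] at this
      simp only [hrankdef]
      rw [← hxdef]
      omega
  -- done: build the forbidden occurrence
  refine havoid σ (fun j hj => ?_) ?_
  · have := hbound j hj
    rw [hσapp j]
    simpa [hσ0def] using this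
  · have hprefix' : ∀ j : ℕ, ∀ hj : j < l, ∀ hjk : j < k, (ι ⟨j, hjk⟩ : ℕ) = j := by
      intro j hj hjk
      exact congrArg Fin.val (hprefix j hj)
    refine ⟨⇑ι, hιmono, ?_, ?_⟩
    · intro j hjk hjl
      have g1 : (ι ⟨j + 1, hjk⟩ : ℕ) = j + 1 := hprefix' (j + 1) hjl hjk
      have g2 : ∀ p : j < k, (ι ⟨j, p⟩ : ℕ) = j := fun p => hprefix' j (by omega) p
      exact g1.trans (congrArg (· + 1) (g2 _).symm)
    · intro s t
      rw [hσapp s, hσapp t]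
      have : σ0 s < σ0 t ↔ rank s < rank t := by
        rw [hσ0def]; exact Iff.rfl
      rw [this]
      exact (horder s t).symm
end

section
/- Let 1 ≤ a and a+l-1 ≤ k, and let p(n) = p_{a,l}^k(n) be the number of P_{a,l}^k-avoiding permutations in S_n. Then for all n ≥ k: p(n) = (k-l) · Σ_{j=0}^{l-1} j! · binom(n-k+l, j) · p(n-1-j). -/
open Finset

/-!
Write `a = b + 1` and `k = b + l + c`. A permutation contains a pattern of `P_{a,l}^k` exactly
when some window of `l` consecutive entries is followed by at least `b` entries smaller than the
whole window and at least `c` entries larger than it (a bad window).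

Call a value extreme if it is among the `b` smallest or the `c` largest, so there are `k - l`
of them. A window through an extreme entry is never bad, while the first window is bad if it
contains no extreme entry. Hence an avoider has a first extreme entry, at some position `j < l`.
The windows through position `j` are harmless and the later ones are the windows of the
remaining `n - 1 - j` entries, so an avoider is the same as `j` distinct non-extreme values
(`(n - k + l)_j` choices), one extreme value (`k - l` choices) and an avoider of length
`n - 1 - j` read up to order isomorphism.
-/

namespace PatternAvoidance

open OrderDual Equiv

section Window

variable {α β : Type*} [LinearOrder α] [LinearOrder β] {b l c n : ℕ}

def belowWindow (l : ℕ) (f : Fin n → α) (i : ℕ) : Finset (Fin n) :=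
  {t | i + l ≤ t ∧ ∀ s : Fin n, i ≤ s → s < i + l → f t < f s}

def IsBadWindow (b l c : ℕ) (f : Fin n → α) (i : ℕ) : Prop :=
  i + l ≤ n ∧ b ≤ #(belowWindow l f i) ∧ c ≤ #(belowWindow l (toDual ∘ f) i)

def HasBadWindow (b l c : ℕ) (f : Fin n → α) : Prop :=
  ∃ i, IsBadWindow b l c f i

lemma mem_belowWindow {f : Fin n → α} {i : ℕ} {t : Fin n} :
    t ∈ belowWindow l f i ↔ i + l ≤ t ∧ ∀ s : Fin n, i ≤ s → s < i + l → f t < f s := by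
  simp [belowWindow]

lemma belowWindow_congr {f : Fin n → α} {g : Fin n → β} (h : ∀ s t, f s < f t ↔ g s < g t)
    (i : ℕ) : belowWindow l f i = belowWindow l g i := by
  ext t
  simp only [mem_belowWindow, h]

lemma hasBadWindow_congr {f : Fin n → α} {g : Fin n → β} (h : ∀ s t, f s < f t ↔ g s < g t) :
    HasBadWindow b l c f ↔ HasBadWindow b l c g := by
  have hdual : ∀ s t, toDual (f s) < toDual (f t) ↔ toDual (g s) < toDual (g t) :=
    fun s t => h t s
  simp only [HasBadWindow, IsBadWindow, belowWindow_congr h, Function.comp_def,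
    belowWindow_congr hdual]

lemma belowWindow_subset {f : Fin n → α} {i : ℕ} {s : Fin n} (hs : i ≤ s) (hs' : s < i + l) :
    belowWindow l f i ⊆ ({t | f t < f s} : Finset (Fin n)) := fun t ht => by
  simpa using (mem_belowWindow.1 ht).2 s hs hs'

lemma card_belowWindow_natAdd {m r : ℕ} (f : Fin (m + r) → α) (i : ℕ) :
    #(belowWindow l f (m + i)) = #(belowWindow l (f ∘ Fin.natAdd m) i) := by
  have : belowWindow l f (m + i) = (belowWindow l (f ∘ Fin.natAdd m) i).map (Fin.natAddEmb m) := by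
    ext u
    induction u using Fin.addCases with
    | left u =>
      have hu := u.isLt
      simp only [mem_belowWindow, mem_map, Fin.natAddEmb_apply, Fin.ext_iff, Fin.val_natAdd,
        Fin.val_castAdd]
      constructor
      · rintro ⟨h, -⟩; omega
      · rintro ⟨a, -, h⟩; omega
    | right t =>
      simp only [mem_belowWindow, mem_map, Fin.natAddEmb_apply, Fin.natAdd_inj, exists_eq_right,
        Fin.val_natAdd, Function.comp_apply, Fin.forall_fin_add, Fin.val_castAdd]
      constructor
      · rintro ⟨ht, -, hs⟩
        exact ⟨by omega, fun s h1 h2 => hs s (by omega) (by omega)⟩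
      · rintro ⟨ht, hs⟩
        exact ⟨by omega, fun s h1 _ => by omega, fun s h1 h2 => hs s (by omega) (by omega)⟩
  rw [this, card_map]

lemma isBadWindow_natAdd {m r : ℕ} (f : Fin (m + r) → α) (i : ℕ) :
    IsBadWindow b l c f (m + i) ↔ IsBadWindow b l c (f ∘ Fin.natAdd m) i := by
  simp only [IsBadWindow, card_belowWindow_natAdd]
  constructor <;> rintro ⟨h, hb, hc⟩ <;> exact ⟨by omega, hb, hc⟩

lemma hasBadWindow_iff_natAdd {m r : ℕ} {f : Fin (m + r) → α}
    (h : ∀ i < m, ¬ IsBadWindow b l c f i) :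
    HasBadWindow b l c f ↔ HasBadWindow b l c (f ∘ Fin.natAdd m) := by
  constructor
  · rintro ⟨i, hi⟩
    have him : m ≤ i := not_lt.1 fun him => h i him hi
    obtain ⟨i, rfl⟩ := Nat.exists_eq_add_of_le him
    exact ⟨i, (isBadWindow_natAdd f i).1 hi⟩
  · rintro ⟨i, hi⟩
    exact ⟨m + i, (isBadWindow_natAdd f i).2 hi⟩

end Window

section Rank

variable {n : ℕ}

lemma card_filter_val_apply_lt (π : Perm (Fin n)) {x : ℕ} (hx : x ≤ n) :
    #{t | (π t : ℕ) < x} = x := by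
  calc #{t | (π t : ℕ) < x} = #{v : Fin n | (v : ℕ) < x} := card_equiv π (by simp)
    _ = x := by rw [Fin.card_filter_val_lt, min_eq_right hx]

lemma card_filter_le_val_apply (π : Perm (Fin n)) {x : ℕ} (hx : x ≤ n) :
    #{t | x ≤ (π t : ℕ)} = n - x := by
  have := card_filter_add_card_filter_not (s := univ) (fun t : Fin n => (π t : ℕ) < x)
  simp only [not_lt, card_univ, Fintype.card_fin, card_filter_val_apply_lt π hx] at this
  omega

lemma card_filter_apply_lt_apply (π : Perm (Fin n)) (s : Fin n) : #{t | π t < π s} = π s := by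
  simpa only [Fin.lt_def] using card_filter_val_apply_lt π (π s).isLt.le

lemma card_filter_apply_gt_apply (π : Perm (Fin n)) (s : Fin n) :
    #{t | π s < π t} = n - (π s + 1) := by
  simpa only [Fin.lt_def, Nat.succ_le_iff] using card_filter_le_val_apply π (π s).isLt

end Rank

section Extreme

variable {b l c n : ℕ}

def IsExtreme (b c : ℕ) {n : ℕ} (v : Fin n) : Prop :=
  (v : ℕ) < b ∨ n ≤ v + c

instance (b c n : ℕ) : DecidablePred (IsExtreme b c : Fin n → Prop) :=
  fun _ => inferInstanceAs (Decidable (_ ∨ _))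

lemma not_isBadWindow_of_isExtreme (π : Perm (Fin n)) {i : ℕ} {s : Fin n} (hs : i ≤ s)
    (hs' : s < i + l) (he : IsExtreme b c (π s)) : ¬ IsBadWindow b l c π i := by
  rintro ⟨-, hb, hc⟩
  rcases he with he | he
  · have := (card_le_card (belowWindow_subset (f := π) hs hs')).trans_eq
      (card_filter_apply_lt_apply π s)
    omega
  · have := (card_le_card (belowWindow_subset (f := toDual ∘ π) hs hs')).trans_eq
      (card_filter_apply_gt_apply π s)
    omega

lemma exists_isExtreme_of_not_hasBadWindow (hn : b + l + c ≤ n) {π : Perm (Fin n)}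
    (h : ¬ HasBadWindow b l c π) : ∃ p : Fin n, (p : ℕ) < l ∧ IsExtreme b c (π p) := by
  by_contra! hmid
  simp only [IsExtreme, not_or, not_lt] at hmid
  refine h ⟨0, by omega, ?_, ?_⟩
  · calc b = #{t | (π t : ℕ) < b} := (card_filter_val_apply_lt π (by omega)).symm
      _ ≤ _ := card_le_card fun t ht => ?_
    rw [mem_filter] at ht
    refine mem_belowWindow.2 ⟨not_lt.1 fun htl => ?_, fun s _ hs => ?_⟩
    · have := (hmid t (by omega)).1
      omega
    · have := (hmid s (by omega)).1
      exact Fin.lt_def.2 (by omega)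
  · calc c = #{t | n - c ≤ (π t : ℕ)} := by rw [card_filter_le_val_apply π (by omega)]; omega
      _ ≤ _ := card_le_card fun t ht => ?_
    rw [mem_filter] at ht
    refine mem_belowWindow.2 ⟨not_lt.1 fun htl => ?_, fun s _ hs => ?_⟩
    · have := (hmid t (by omega)).2
      omega
    · have := (hmid s (by omega)).2
      exact toDual_lt_toDual.2 (Fin.lt_def.2 (by omega))

end Extreme

section Occurrence

variable {α : Type*} [LinearOrder α] {b l c n k : ℕ}

lemma exists_perm_lt_iff {f : Fin k → α} (hf : Function.Injective f) :
    ∃ σ : Perm (Fin k), ∀ s t, σ s < σ t ↔ f s < f t := by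
  have hmono : StrictMono (f ∘ Tuple.sort f) :=
    (Tuple.monotone_sort f).strictMono_of_injective (hf.comp (Tuple.sort f).injective)
  refine ⟨(Tuple.sort f)⁻¹, fun s t => ?_⟩
  simpa using (hmono.lt_iff_lt (a := (Tuple.sort f)⁻¹ s) (b := (Tuple.sort f)⁻¹ t)).symm

lemma exists_strictMono_window {i : ℕ} (hi : i + l ≤ n) {C : Finset (Fin n)}
    (hC : ∀ u ∈ C, i + l ≤ u) (hk : #C + l = k) :
    ∃ ι : Fin k → Fin n, StrictMono ι ∧ (∀ d : Fin k, (d : ℕ) < l → (ι d : ℕ) = i + d) ∧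
      C ⊆ univ.image ι := by
  let e := C.orderEmbOfFin rfl
  have he : ∀ x, i + l ≤ e x := fun x => hC _ (C.orderEmbOfFin_mem rfl x)
  let ι : Fin k → Fin n := fun t =>
    if h : (t : ℕ) < l then ⟨i + t, by omega⟩ else e ⟨t - l, by omega⟩
  refine ⟨ι, fun s t hst => ?_, fun d hd => by simp [ι, hd], fun u hu => ?_⟩
  · rw [Fin.lt_def] at hst
    simp only [ι]
    split_ifs with hs ht ht
    · exact Fin.lt_def.2 (by simp; omega)
    · exact Fin.lt_def.2 (by have := he ⟨t - l, by omega⟩; simp; omega)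
    · omega
    · exact e.strictMono (Fin.lt_def.2 (by simp; omega))
  · obtain ⟨x, rfl⟩ : u ∈ Set.range e := by rw [C.range_orderEmbOfFin]; exact hu
    refine mem_image.2 ⟨⟨x + l, by omega⟩, mem_univ _, ?_⟩
    simp [ι]

lemma card_le_card_belowWindow {f : Fin n → α} {ι : Fin k → Fin n} (hι : StrictMono ι) {i : ℕ}
    (hwin : ∀ d : Fin k, (d : ℕ) < l → (ι d : ℕ) = i + d) (hl : 0 < l) {T : Finset (Fin k)}
    (hT : ∀ t ∈ T, ∀ d : Fin k, (d : ℕ) < l → f (ι t) < f (ι d)) :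
    #T ≤ #(belowWindow l f i) := by
  rw [← card_map ⟨ι, hι.injective⟩]
  refine card_le_card fun u hu => ?_
  obtain ⟨t, ht, rfl⟩ := mem_map.1 hu
  have htl : l ≤ t := not_lt.1 fun htl => lt_irrefl _ (hT t ht t htl)
  refine mem_belowWindow.2 ⟨?_, fun s hs hs' => ?_⟩
  · have hlast := hwin ⟨l - 1, by omega⟩ (by simp; omega)
    have := hι (show (⟨l - 1, by omega⟩ : Fin k) < t from Fin.lt_def.2 (by simp; omega))
    simp only [Fin.lt_def] at this hlast
    simp only [Function.Embedding.coeFn_mk]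
    omega
  · have hs : ι ⟨s - i, by omega⟩ = s := Fin.ext (by rw [hwin _ (by simp; omega)]; simp; omega)
    simpa [hs] using hT t ht ⟨s - i, by omega⟩ (by simp; omega)

lemma card_le_card_filter_apply_lt {f : Fin n → α} {ι : Fin k → Fin n} {i : ℕ}
    (hwin : ∀ d : Fin k, (d : ℕ) < l → (ι d : ℕ) = i + d) {L : Finset (Fin n)}
    (hLι : L ⊆ univ.image ι) (hL : L ⊆ belowWindow l f i) {d : Fin k} (hd : (d : ℕ) < l) :
    #L ≤ #{t | f (ι t) < f (ι d)} := by
  refine (card_le_card fun u hu => ?_).trans (card_image_le (f := ι))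
  obtain ⟨t, -, rfl⟩ := mem_image.1 (hLι hu)
  refine mem_image_of_mem ι (mem_filter.2 ⟨mem_univ _, ?_⟩)
  exact (mem_belowWindow.1 (hL hu)).2 (ι d) (by rw [hwin d hd]; omega) (by rw [hwin d hd]; omega)

lemma hasBadWindow_of_isOcc (hl : 0 < l) {π : Perm (Fin n)} {σ : Perm (Fin (b + l + c))}
    (hσ : ∀ d : Fin (b + l + c), (d : ℕ) < l → b ≤ σ d ∧ σ d < b + l)
    (hocc : IsOcc π σ (fun j => j + 1 < l)) : HasBadWindow b l c π := by
  obtain ⟨ι, hι, hadj, hord⟩ := hocc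
  set i := (ι ⟨0, by omega⟩ : ℕ)
  have hwin : ∀ d : Fin (b + l + c), (d : ℕ) < l → (ι d : ℕ) = i + d := by
    rintro ⟨d, hd⟩ hdl
    induction d with
    | zero => rfl
    | succ d ih =>
      have := ih (by omega) (by simp only at hdl ⊢; omega)
      rw [hadj d hd hdl, this]
      rfl
  have hi : i + l ≤ n := by
    have := hwin ⟨l - 1, by omega⟩ (by simp; omega)
    have := (ι ⟨l - 1, by omega⟩).isLt
    simp only at *
    omega
  refine ⟨i, hi, ?_, ?_⟩
  · calc b = #{t | (σ t : ℕ) < b} := (card_filter_val_apply_lt σ (by omega)).symm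
      _ ≤ _ := card_le_card_belowWindow hι hwin hl fun t ht d hd => ?_
    rw [mem_filter] at ht
    exact (hord t d).1 (Fin.lt_def.2 (by have := (hσ d hd).1; omega))
  · calc c = #{t | b + l ≤ (σ t : ℕ)} := by rw [card_filter_le_val_apply σ (by omega)]; omega
      _ ≤ _ := card_le_card_belowWindow hι hwin hl fun t ht d hd => ?_
    rw [mem_filter] at ht
    exact toDual_lt_toDual.2 ((hord d t).1 (Fin.lt_def.2 (by have := (hσ d hd).2; omega)))

lemma exists_isOcc_of_isBadWindow (hl : 0 < l) {π : Perm (Fin n)} {i : ℕ}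
    (h : IsBadWindow b l c π i) :
    ∃ σ : Perm (Fin (b + l + c)), (∀ d : Fin (b + l + c), (d : ℕ) < l → b ≤ σ d ∧ σ d < b + l) ∧
      IsOcc π σ (fun j => j + 1 < l) := by
  obtain ⟨hi, hlo, hhi⟩ := h
  obtain ⟨Lo, hLo, hLoc⟩ := exists_subset_card_eq hlo
  obtain ⟨Hi, hHi, hHic⟩ := exists_subset_card_eq hhi
  have hdisj : Disjoint Lo Hi := disjoint_left.2 fun u hu hu' =>
    lt_asymm ((mem_belowWindow.1 (hLo hu)).2 ⟨i, by omega⟩ le_rfl (by simp; omega))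
      (toDual_lt_toDual.1 ((mem_belowWindow.1 (hHi hu')).2 ⟨i, by omega⟩ le_rfl (by simp; omega)))
  have hafter : ∀ u ∈ Lo ∪ Hi, i + l ≤ u := by
    intro u hu
    rcases mem_union.1 hu with hu | hu
    · exact (mem_belowWindow.1 (hLo hu)).1
    · exact (mem_belowWindow.1 (hHi hu)).1
  obtain ⟨ι, hι, hwin, hC⟩ := exists_strictMono_window (k := b + l + c) hi hafter
    (by rw [card_union_of_disjoint hdisj]; omega)
  obtain ⟨σ, hσ⟩ := exists_perm_lt_iff (π.injective.comp hι.injective)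
  simp only [Function.comp_apply] at hσ
  refine ⟨σ, fun d hd => ?_, ι, hι, fun j hj hadj => ?_, hσ⟩
  · -- at least `b` letters of the pattern lie below `σ d` and at least `c` above it
    have hb := card_le_card_filter_apply_lt hwin (subset_union_left.trans hC) hLo hd
    have hc := card_le_card_filter_apply_lt hwin (subset_union_right.trans hC) hHi hd
    simp only [Function.comp_apply, toDual_lt_toDual, ← hσ, card_filter_apply_lt_apply,
      card_filter_apply_gt_apply] at hb hc
    omega
  · have h1 := hwin ⟨j + 1, hj⟩ hadj
    have h2 := hwin ⟨j, by omega⟩ (by simp; omega)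
    simp only at h1 h2
    omega

theorem avoidsP_iff_not_hasBadWindow (hl : 0 < l) (π : Perm (Fin n)) :
    AvoidsP (b + 1) l (b + l + c) π ↔ ¬ HasBadWindow b l c π := by
  constructor
  · rintro hav ⟨i, hi⟩
    obtain ⟨σ, hσ, hocc⟩ := exists_isOcc_of_isBadWindow hl hi
    exact hav σ (fun d hd => by have := hσ d hd; omega) hocc
  · intro h σ hσ hocc
    exact h (hasBadWindow_of_isOcc hl (fun d hd => by have := hσ d hd; omega) hocc)

end Occurrence

section Counting

variable {b l c : ℕ}

def IsFirstExtremeAt (b c j : ℕ) {n N : ℕ} (f : Fin n → Fin N) : Prop :=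
  (∀ p : Fin n, (p : ℕ) < j → ¬ IsExtreme b c (f p)) ∧
    ∃ p : Fin n, (p : ℕ) = j ∧ IsExtreme b c (f p)

lemma isFirstExtremeAt_comp_castAdd {m r N j : ℕ} (hj : j < m) (f : Fin (m + r) → Fin N) :
    IsFirstExtremeAt b c j (f ∘ Fin.castAdd r) ↔ IsFirstExtremeAt b c j f := by
  have hcast : ∀ (p : Fin (m + r)) (hp : (p : ℕ) < m), Fin.castAdd r ⟨p, hp⟩ = p :=
    fun p _ => Fin.ext rfl
  constructor
  · rintro ⟨hmid, p, hp, he⟩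
    refine ⟨fun q hq => ?_, Fin.castAdd r p, hp, he⟩
    have := hmid ⟨q, by omega⟩ hq
    rwa [Function.comp_apply, hcast] at this
  · rintro ⟨hmid, p, hp, he⟩
    refine ⟨fun q hq => hmid _ hq, ⟨p, by omega⟩, hp, ?_⟩
    rwa [Function.comp_apply, hcast]

lemma isFirstExtremeAt_iff {j N : ℕ} (f : Fin (j + 1) → Fin N) :
    IsFirstExtremeAt b c j f ↔
      (∀ t : Fin j, ¬ IsExtreme b c (f t.castSucc)) ∧ IsExtreme b c (f (Fin.last j)) := by
  constructor
  · rintro ⟨hmid, p, hp, he⟩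
    obtain rfl : p = Fin.last j := Fin.ext hp
    exact ⟨fun t => hmid _ t.isLt, he⟩
  · rintro ⟨hmid, he⟩
    exact ⟨fun p hp => by simpa using hmid ⟨p, hp⟩, Fin.last j, rfl, he⟩

lemma card_not_hasBadWindow_eq_sum {n : ℕ} (hn : b + l + c ≤ n) :
    Nat.card {π : Perm (Fin n) // ¬ HasBadWindow b l c π} =
      ∑ j ∈ range l,
        Nat.card {π : Perm (Fin n) // ¬ HasBadWindow b l c π ∧ IsFirstExtremeAt b c j π} := by
  classical
  simp only [Nat.card_eq_fintype_card, Fintype.card_subtype]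
  rw [← card_biUnion]
  · congr 1
    ext π
    simp only [mem_filter, mem_univ, true_and, mem_biUnion, mem_range]
    constructor
    · intro h
      obtain ⟨p, hp, he⟩ := exists_isExtreme_of_not_hasBadWindow hn h
      have hex : ∃ j, ∃ q : Fin n, (q : ℕ) = j ∧ IsExtreme b c (π q) := ⟨p, p, rfl, he⟩
      refine ⟨Nat.find hex, (Nat.find_min' hex ⟨p, rfl, he⟩).trans_lt hp, h,
        fun q hq hq' => Nat.find_min hex hq ⟨q, rfl, hq'⟩, Nat.find_spec hex⟩
    · rintro ⟨j, -, h, -⟩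
      exact h
  · intro j _ j' _ hjj'
    refine disjoint_filter.2 fun π _ ⟨_, hmid, p, hp, he⟩ ⟨_, hmid', p', hp', he'⟩ => ?_
    rcases lt_or_gt_of_ne hjj' with h | h
    · exact hmid' p (hp ▸ h) he
    · exact hmid p' (hp' ▸ h) he'

lemma card_isExtreme {N : ℕ} (h : b + c ≤ N) : #{v : Fin N | IsExtreme b c v} = b + c := by
  have hlow : #{v : Fin N | (v : ℕ) < b} = b := by
    rw [Fin.card_filter_val_lt, min_eq_right (by omega)]
  have hhigh : #{v : Fin N | N - c ≤ (v : ℕ)} = c := by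
    have := card_filter_add_card_filter_not (s := univ) (fun v : Fin N => (v : ℕ) < N - c)
    simp only [not_lt, card_univ, Fintype.card_fin, Fin.card_filter_val_lt] at this
    omega
  have hsplit : univ.filter (fun v : Fin N => IsExtreme b c v) =
      univ.filter (fun v : Fin N => (v : ℕ) < b) ∪ univ.filter (fun v : Fin N => N - c ≤ (v : ℕ)) := by
    ext v
    simp only [mem_filter, mem_univ, true_and, mem_union]
    unfold IsExtreme
    omega
  rw [hsplit, card_union_of_disjoint (disjoint_filter.2 fun v _ h1 h2 => by omega), hlow, hhigh]

lemma card_not_isExtreme {N : ℕ} (h : b + c ≤ N) :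
    #{v : Fin N | ¬ IsExtreme b c v} = N - (b + c) := by
  have := card_filter_add_card_filter_not (s := univ) (fun v : Fin N => IsExtreme b c v)
  rw [card_isExtreme h, card_univ, Fintype.card_fin] at this
  omega

lemma card_embedding_castSucc_not_last {X : Type*} [Fintype X] [DecidableEq X] (P : X → Prop)
    [DecidablePred P] (j : ℕ) :
    Nat.card {w : Fin (j + 1) ↪ X // (∀ t : Fin j, ¬ P (w t.castSucc)) ∧ P (w (Fin.last j))} =
      (Nat.card {x // ¬ P x}).descFactorial j * Nat.card {x // P x} := by
  let e : {w : Fin (j + 1) ↪ X // (∀ t : Fin j, ¬ P (w t.castSucc)) ∧ P (w (Fin.last j))} ≃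
      (Fin j ↪ {x // ¬ P x}) × {x // P x} :=
    { toFun := fun w => (⟨fun t => ⟨w.1 t.castSucc, w.2.1 t⟩, fun s t h =>
          Fin.castSucc_injective j (w.1.injective (congrArg Subtype.val h))⟩,
        ⟨w.1 (Fin.last j), w.2.2⟩)
      invFun := fun p => ⟨⟨Fin.snoc (α := fun _ => X) (fun t => (p.1 t : X)) p.2,
          Fin.snoc_injective_of_injective (Subtype.val_injective.comp p.1.injective)
            fun ⟨t, ht⟩ => (p.1 t).2 (by rw [show (p.1 t : X) = p.2 from ht]; exact p.2.2)⟩,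
        fun t => by simpa using (p.1 t).2, by simpa using p.2.2⟩
      left_inv := fun w => by
        ext t
        induction t using Fin.lastCases <;> simp; rfl
      right_inv := fun p => by ext <;> simp }
  rw [Nat.card_congr e, Nat.card_prod]
  simp only [Nat.card_eq_fintype_card, Fintype.card_embedding_eq, Fintype.card_fin]

lemma card_embedding_isFirstExtremeAt {N : ℕ} (h : b + c ≤ N) (j : ℕ) :
    Nat.card {w : Fin (j + 1) ↪ Fin N // IsFirstExtremeAt b c j w} =
      (N - (b + c)).descFactorial j * (b + c) := by
  classical
  simp only [isFirstExtremeAt_iff]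
  rw [card_embedding_castSucc_not_last, Nat.card_eq_fintype_card, Nat.card_eq_fintype_card,
    Fintype.card_subtype, Fintype.card_subtype, card_isExtreme h, card_not_isExtreme h]

lemma card_embedding_not_hasBadWindow {α : Type*} [LinearOrder α] {S : Set α} [Fintype S]
    {r : ℕ} (hS : Fintype.card S = r) :
    Nat.card {g : Fin r ↪ S // ¬ HasBadWindow b l c (Subtype.val ∘ g)} =
      Nat.card {σ : Perm (Fin r) // ¬ HasBadWindow b l c σ} := by
  let e := (Fintype.orderIsoFinOfCardEq S hS).symm
  refine Nat.card_congr (((Equiv.embeddingCongr (Equiv.refl _) e.toEquiv).trans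
    (Equiv.embeddingEquivOfFinite _)).subtypeEquiv fun g => ?_)
  exact not_congr (hasBadWindow_congr fun s t => Subtype.coe_lt_coe.trans e.lt_iff_lt.symm)

/-- Definitionally, the two components of the image of `π` are `π ∘ Fin.castAdd r` and the
corestriction of `π ∘ Fin.natAdd m`. -/
noncomputable def prefixSuffixEquiv (m r : ℕ) :
    Perm (Fin (m + r)) ≃ Σ w : Fin m ↪ Fin (m + r), (Fin r ↪ ↥(Set.range w)ᶜ) :=
  (Equiv.embeddingEquivOfFinite _).symm.trans <|
    (Equiv.embeddingCongr finSumFinEquiv (Equiv.refl _)).symm.trans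
      Equiv.sumEmbeddingEquivSigmaEmbeddingRestricted

lemma card_not_hasBadWindow_isFirstExtremeAt {n j : ℕ} (hj : j < l) (hjn : j + 1 ≤ n)
    (hbc : b + c ≤ n) :
    Nat.card {π : Perm (Fin n) // ¬ HasBadWindow b l c π ∧ IsFirstExtremeAt b c j π} =
      (n - (b + c)).descFactorial j * (b + c) *
        Nat.card {σ : Perm (Fin (n - (j + 1))) // ¬ HasBadWindow b l c σ} := by
  classical
  obtain ⟨r, rfl⟩ := Nat.exists_eq_add_of_le hjn
  rw [Nat.add_sub_cancel_left]
  have hsplit : ∀ π : Perm (Fin (j + 1 + r)),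
      (¬ HasBadWindow b l c π ∧ IsFirstExtremeAt b c j π) ↔
        (IsFirstExtremeAt b c j (π ∘ Fin.castAdd r) ∧
          ¬ HasBadWindow b l c (π ∘ Fin.natAdd (j + 1))) := by
    intro π
    rw [isFirstExtremeAt_comp_castAdd (by omega), and_comm]
    refine and_congr_right fun hfirst => not_congr (hasBadWindow_iff_natAdd fun i hi => ?_)
    obtain ⟨p, hp, he⟩ := hfirst.2
    exact not_isBadWindow_of_isExtreme π (by omega) (by omega) he
  calc _ = Nat.card {x : Σ w : Fin (j + 1) ↪ Fin (j + 1 + r), (Fin r ↪ ↥(Set.range w)ᶜ) //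
          IsFirstExtremeAt b c j x.1 ∧ ¬ HasBadWindow b l c (Subtype.val ∘ x.2)} :=
        Nat.card_congr ((prefixSuffixEquiv _ _).subtypeEquiv hsplit)
    _ = Nat.card (Σ w : {w : Fin (j + 1) ↪ Fin (j + 1 + r) // IsFirstExtremeAt b c j w},
          {g : Fin r ↪ ↥(Set.range w.1)ᶜ // ¬ HasBadWindow b l c (Subtype.val ∘ g)}) :=
        Nat.card_congr ⟨fun x => ⟨⟨x.1.1, x.2.1⟩, x.1.2, x.2.2⟩,
          fun y => ⟨⟨y.1.1, y.2.1⟩, y.1.2, y.2.2⟩, fun _ => rfl, fun _ => rfl⟩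
    _ = ∑ _w : {w : Fin (j + 1) ↪ Fin (j + 1 + r) // IsFirstExtremeAt b c j w},
          Nat.card {σ : Perm (Fin r) // ¬ HasBadWindow b l c σ} := by
        rw [Nat.card_sigma]
        refine sum_congr rfl fun w _ => card_embedding_not_hasBadWindow ?_
        rw [Fintype.card_compl_set, Fintype.card_fin, Set.card_range_of_injective w.1.injective,
          Fintype.card_fin]
        omega
    _ = _ := by
        rw [sum_const, card_univ, smul_eq_mul, ← Nat.card_eq_fintype_card,
          card_embedding_isFirstExtremeAt hbc]

end Counting

end PatternAvoidance

open PatternAvoidance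

/-- The recurrence from the proof of Theorem 3.2: for `1 ≤ a`, `a + l - 1 ≤ k`
and `n ≥ k`, `p(n) = (k-l)·Σ_{j=0}^{l-1} j!·binom(n-k+l, j)·p(n-1-j)`. -/
theorem pP_rec (a l k n : ℕ) (ha : 1 ≤ a) (hl : 1 ≤ l) (hk : a + l - 1 ≤ k) (hn : k ≤ n) :
    pP a l k n = (k - l) *
      ∑ j ∈ Finset.range l, Nat.factorial j * Nat.choose (n - k + l) j * pP a l k (n - 1 - j) := by
  obtain ⟨b, rfl⟩ : ∃ b, a = b + 1 := ⟨a - 1, by omega⟩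
  obtain ⟨c, rfl⟩ : ∃ c, k = b + l + c := ⟨k - (b + l), by omega⟩
  have hpP : ∀ m, pP (b + 1) l (b + l + c) m =
      Nat.card {σ : Equiv.Perm (Fin m) // ¬ HasBadWindow b l c σ} := fun m =>
    Nat.card_congr (Equiv.subtypeEquivRight fun σ => avoidsP_iff_not_hasBadWindow hl σ)
  rw [hpP, card_not_hasBadWindow_eq_sum hn, mul_sum]
  refine sum_congr rfl fun j hj => ?_
  have hj : j < l := mem_range.1 hj
  rw [card_not_hasBadWindow_isFirstExtremeAt hj (by omega) (by omega), hpP,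
    Nat.descFactorial_eq_factorial_mul_choose, show n - (b + c) = n - (b + l + c) + l by omega,
    show b + l + c - l = b + c by omega, show n - (j + 1) = n - 1 - j by omega]
  ring
end

section
/- The exponential generating function for the number of permutations of [n] avoiding both generalized patterns 12-3 and 21-3 is e^{x + x²/2}. -/
/-- `π` contains an occurrence of `21-3`: indices `i`, `j` with `i + 1 < j`
and `π (i+1) < π i < π j`. -/
def Occ21_3 {n : ℕ} (π : Equiv.Perm (Fin n)) : Prop :=
  ∃ i j : Fin n, ∃ hi : (i : ℕ) + 1 < n,
    (i : ℕ) + 1 < (j : ℕ) ∧ π ⟨(i : ℕ) + 1, hi⟩ < π i ∧ π i < π j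

/-- `a(n)`: the number of permutations of `[n]` avoiding both `12-3` and `21-3`. -/
noncomputable def a12_21_3 (n : ℕ) : ℕ :=
  Nat.card {π : Equiv.Perm (Fin n) // ¬ Occ12_3 π ∧ ¬ Occ21_3 π}

/-- The exponential `Σ_{m≥0} Sᵐ/m!` of a power series `S` (with zero constant
term this is the usual formal exponential). -/
noncomputable def psExp (S : PowerSeries ℚ) : PowerSeries ℚ :=
  PowerSeries.mk fun n => ∑ m ∈ Finset.range (n + 1),
    PowerSeries.coeff (R := ℚ) n (S ^ m) / (Nat.factorial m)

/-! A permutation avoids `12-3` and `21-3` exactly when every entry after the second is smaller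
than one of the two entries just before it. Then the largest entry stands in position `0` or `1`;
deleting it, and in the second case also the first entry (which can take `n + 1` values), gives
the involution recurrence `a (n + 2) = a (n + 1) + (n + 1) * a n`. So the exponential generating
function `f` satisfies `f' = (1 + x) f` with `f 0 = 1`, and by the chain rule so does
`exp ∘ (x + x² / 2)`. -/

open Equiv PowerSeries

section LtMaxPrevTwo

variable {α : Type*} [LinearOrder α]

def LtMaxPrevTwo {n : ℕ} (f : Fin n → α) : Prop :=
  ∀ (i : ℕ) (h : i + 2 < n), f ⟨i + 2, h⟩ < max (f ⟨i, by omega⟩) (f ⟨i + 1, by omega⟩)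

theorem LtMaxPrevTwo.lt_max {n : ℕ} {f : Fin n → α} (hf : LtMaxPrevTwo f) {i j : ℕ}
    (hij : i + 1 < j) (hj : j < n) :
    f ⟨j, hj⟩ < max (f ⟨i, by omega⟩) (f ⟨i + 1, by omega⟩) := by
  obtain ⟨d, rfl⟩ := Nat.exists_eq_add_of_lt hij
  induction d generalizing i with
  | zero => exact hf i hj
  | succ d ih =>
    calc f ⟨i + 1 + (d + 1) + 1, hj⟩ = f ⟨i + 1 + 1 + d + 1, by omega⟩ := by congr 2; omega
      _ < max (f ⟨i + 1, by omega⟩) (f ⟨i + 2, by omega⟩) := ih (by omega) _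
      _ ≤ max (f ⟨i, by omega⟩) (f ⟨i + 1, by omega⟩) :=
        max_le (le_max_right _ _) (hf i (by omega)).le

theorem StrictMono.ltMaxPrevTwo_comp_iff {β : Type*} [LinearOrder β] {g : α → β}
    (hg : StrictMono g) {n : ℕ} {f : Fin n → α} : LtMaxPrevTwo (g ∘ f) ↔ LtMaxPrevTwo f := by
  simp only [LtMaxPrevTwo, Function.comp_apply, ← hg.monotone.map_max, hg.lt_iff_lt]

theorem ltMaxPrevTwo_iff_succ {n : ℕ} (f : Fin (n + 1) → α) :
    LtMaxPrevTwo f ↔ (∀ h : 2 < n + 1, f ⟨2, h⟩ < max (f ⟨0, by omega⟩) (f ⟨1, by omega⟩)) ∧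
      LtMaxPrevTwo fun i : Fin n => f i.succ := by
  refine ⟨fun hf => ⟨hf 0, fun i h => hf (i + 1) (by omega)⟩, fun ⟨h0, hs⟩ i h => ?_⟩
  cases i with
  | zero => exact h0 h
  | succ i => exact hs i (by omega)

theorem ltMaxPrevTwo_of_lt_three {n : ℕ} (hn : n < 3) (f : Fin n → α) : LtMaxPrevTwo f :=
  fun i h => absurd h (by omega)

end LtMaxPrevTwo

theorem not_occ12_3_and_not_occ21_3_iff {n : ℕ} (π : Perm (Fin n)) :
    ¬ Occ12_3 π ∧ ¬ Occ21_3 π ↔ LtMaxPrevTwo π := by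
  constructor
  · rintro ⟨h12, h21⟩ i h
    have hne : ∀ {a b : Fin n}, (a : ℕ) ≠ b → π a ≠ π b :=
      fun hab => π.injective.ne (Fin.ne_of_val_ne hab)
    by_contra hle
    rw [not_lt, max_le_iff] at hle
    rcases lt_or_gt_of_ne (hne (a := ⟨i, by omega⟩) (b := ⟨i + 1, by omega⟩) (by simp))
      with hlt | hgt
    · exact h12 ⟨⟨i, by omega⟩, ⟨i + 2, h⟩, by simp only; omega, by simp only; omega, hlt,
        lt_of_le_of_ne hle.2 (hne (by simp))⟩
    · exact h21 ⟨⟨i, by omega⟩, ⟨i + 2, h⟩, by simp only; omega, by simp only; omega, hgt,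
        lt_of_le_of_ne hle.1 (hne (by simp))⟩
  · intro hπ
    refine ⟨fun ⟨_, j, _, hij, h1, h2⟩ => ?_, fun ⟨_, j, _, hij, h1, h2⟩ => ?_⟩
    · have := hπ.lt_max hij j.isLt
      rw [max_eq_right h1.le] at this
      exact lt_asymm this h2
    · have := hπ.lt_max hij j.isLt
      rw [max_eq_left h1.le] at this
      exact lt_asymm this h2

theorem LtMaxPrevTwo.apply_zero_eq_last_or_apply_one_eq_last {n : ℕ} {π : Perm (Fin (n + 2))}
    (hπ : LtMaxPrevTwo π) : π 0 = Fin.last (n + 1) ∨ π 1 = Fin.last (n + 1) := by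
  obtain ⟨⟨_ | _ | k, hk⟩, hj⟩ := π.surjective (Fin.last (n + 1))
  · exact Or.inl hj
  · exact Or.inr hj
  · exact absurd (hj ▸ hπ k hk) (Fin.le_last _).not_gt

namespace Equiv.Perm

/-- Unlike `Equiv.Perm.decomposeFin`, this keeps the relative order of `π 1, …, π n`. -/
noncomputable def decomposeFinSuccAbove (n : ℕ) :
    Perm (Fin (n + 1)) ≃ Fin (n + 1) × Perm (Fin n) where
  toFun π := (π 0, (finSuccAboveEquiv 0).trans <|
    (π.subtypeEquiv (p := (· ≠ 0)) (q := (· ≠ π 0)) fun _ => π.injective.ne_iff.symm).trans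
      (finSuccAboveEquiv (π 0)).symm)
  invFun p := Equiv.ofBijective (Fin.cons p.1 (p.1.succAbove ∘ p.2)) <|
    Finite.injective_iff_bijective.1 <| Fin.cons_injective_iff.2
      ⟨fun ⟨i, hi⟩ => Fin.succAbove_ne _ _ hi, Fin.succAbove_right_injective.comp p.2.injective⟩
  left_inv π := Equiv.ext fun i => by
    cases i using Fin.cases with
    | zero => rfl
    | succ i => exact congrArg Subtype.val ((finSuccAboveEquiv (π 0)).apply_symm_apply _)
  right_inv p := Prod.ext rfl <| Equiv.ext fun i =>
    (Equiv.symm_apply_eq (finSuccAboveEquiv p.1)).2 rfl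

theorem succAbove_decomposeFinSuccAbove_snd {n : ℕ} (π : Perm (Fin (n + 1))) (i : Fin n) :
    (π 0).succAbove ((decomposeFinSuccAbove n π).2 i) = π i.succ := by
  exact congrArg Subtype.val ((finSuccAboveEquiv (π 0)).apply_symm_apply _)

theorem ltMaxPrevTwo_iff_decomposeFinSuccAbove_snd {n : ℕ} {π : Perm (Fin (n + 1))}
    {k : Fin (n + 1)} (hk : (k : ℕ) < 2) (hπk : π k = Fin.last n) :
    LtMaxPrevTwo π ↔ LtMaxPrevTwo (decomposeFinSuccAbove n π).2 := by
  have htail : (fun i : Fin n => π i.succ) = (π 0).succAbove ∘ (decomposeFinSuccAbove n π).2 :=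
    funext fun i => (succAbove_decomposeFinSuccAbove_snd π i).symm
  rw [ltMaxPrevTwo_iff_succ, htail, (Fin.strictMono_succAbove _).ltMaxPrevTwo_comp_iff,
    and_iff_right_iff_imp]
  intro _ h
  have h2k : (⟨2, h⟩ : Fin (n + 1)) ≠ k := Fin.ne_of_val_ne (by simp only; omega)
  calc π ⟨2, h⟩ < Fin.last n := Fin.lt_last_iff_ne_last.2 (hπk ▸ π.injective.ne h2k)
    _ ≤ max (π ⟨0, by omega⟩) (π ⟨1, by omega⟩) := by
      rcases k with ⟨_ | _ | k, _⟩
      · exact hπk ▸ le_max_left _ _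
      · exact hπk ▸ le_max_right _ _
      · simp at hk

end Equiv.Perm

theorem card_ltMaxPrevTwo_apply_zero_eq_last (n : ℕ) :
    Nat.card {π : Perm (Fin (n + 1)) // LtMaxPrevTwo π ∧ π 0 = Fin.last n} =
      Nat.card {σ : Perm (Fin n) // LtMaxPrevTwo σ} := by
  have hk0 {π : Perm (Fin (n + 1))} :=
    Perm.ltMaxPrevTwo_iff_decomposeFinSuccAbove_snd (π := π) (k := 0) (by simp)
  have key : ∀ π : Perm (Fin (n + 1)), LtMaxPrevTwo π ∧ π 0 = Fin.last n ↔
      (Perm.decomposeFinSuccAbove n π).1 = Fin.last n ∧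
        LtMaxPrevTwo (Perm.decomposeFinSuccAbove n π).2 :=
    fun π => ⟨fun ⟨hπ, h0⟩ => ⟨h0, (hk0 h0).1 hπ⟩, fun ⟨h0, hσ⟩ => ⟨(hk0 h0).2 hσ, h0⟩⟩
  rw [Nat.card_congr (((Perm.decomposeFinSuccAbove n).subtypeEquiv key).trans
      (subtypeProdEquivProd (p := (· = Fin.last n))
        (q := fun σ : Perm (Fin n) => LtMaxPrevTwo σ))),
    Nat.card_prod, Nat.card_unique, one_mul]

theorem card_ltMaxPrevTwo_apply_one_eq_last (n : ℕ) :
    Nat.card {π : Perm (Fin (n + 2)) // LtMaxPrevTwo π ∧ π 1 = Fin.last (n + 1)} =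
      (n + 1) * Nat.card {σ : Perm (Fin n) // LtMaxPrevTwo σ} := by
  have hk1 {π : Perm (Fin (n + 2))} :=
    Perm.ltMaxPrevTwo_iff_decomposeFinSuccAbove_snd (π := π) (k := 1) (by simp)
  have key : ∀ π : Perm (Fin (n + 2)), LtMaxPrevTwo π ∧ π 1 = Fin.last (n + 1) ↔
      (Perm.decomposeFinSuccAbove _ π).1 ≠ Fin.last (n + 1) ∧
        (LtMaxPrevTwo (Perm.decomposeFinSuccAbove _ π).2 ∧
          (Perm.decomposeFinSuccAbove _ π).2 0 = Fin.last n) := by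
    intro π
    have h1 : π 1 = Fin.last (n + 1) ↔
        π 0 ≠ Fin.last (n + 1) ∧ (Perm.decomposeFinSuccAbove _ π).2 0 = Fin.last n := by
      rw [← Fin.succ_zero_eq_one, ← Perm.succAbove_decomposeFinSuccAbove_snd π 0]
      by_cases h0 : π 0 = Fin.last (n + 1)
      · simp [h0, Fin.succAbove_last]
      · simp [h0, Fin.succAbove_eq_last_iff h0]
    constructor
    · rintro ⟨hπ, hπ1⟩
      exact ⟨(h1.1 hπ1).1, (hk1 hπ1).1 hπ, (h1.1 hπ1).2⟩
    · rintro ⟨h0, hσ, hσ0⟩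
      have hπ1 := h1.2 ⟨h0, hσ0⟩
      exact ⟨(hk1 hπ1).2 hσ, hπ1⟩
  rw [Nat.card_congr (((Perm.decomposeFinSuccAbove _).subtypeEquiv key).trans
      (subtypeProdEquivProd (p := (· ≠ Fin.last (n + 1)))
        (q := fun σ : Perm (Fin (n + 1)) => LtMaxPrevTwo σ ∧ σ 0 = Fin.last n))),
    Nat.card_prod, card_ltMaxPrevTwo_apply_zero_eq_last,
    Nat.card_congr (finSuccAboveEquiv (Fin.last (n + 1))).symm, Nat.card_fin]

theorem card_ltMaxPrevTwo_add_two (n : ℕ) :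
    Nat.card {π : Perm (Fin (n + 2)) // LtMaxPrevTwo π} =
      Nat.card {π : Perm (Fin (n + 1)) // LtMaxPrevTwo π} +
        (n + 1) * Nat.card {π : Perm (Fin n) // LtMaxPrevTwo π} := by
  classical
  have hsplit : ∀ π : Perm (Fin (n + 2)), LtMaxPrevTwo π ↔
      (LtMaxPrevTwo π ∧ π 0 = Fin.last (n + 1)) ∨ (LtMaxPrevTwo π ∧ π 1 = Fin.last (n + 1)) :=
    fun π => ⟨fun h => h.apply_zero_eq_last_or_apply_one_eq_last.imp (⟨h, ·⟩) (⟨h, ·⟩),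
      fun h => h.elim And.left And.left⟩
  have hdisj : Disjoint (fun π : Perm (Fin (n + 2)) => LtMaxPrevTwo π ∧ π 0 = Fin.last (n + 1))
      (fun π => LtMaxPrevTwo π ∧ π 1 = Fin.last (n + 1)) := by
    simp only [Pi.disjoint_iff, Prop.disjoint_iff]
    rintro π ⟨⟨_, h0⟩, _, h1⟩
    exact zero_ne_one (π.injective (h0.trans h1.symm))
  rw [Nat.card_congr ((subtypeEquivRight hsplit).trans (subtypeOrEquiv _ _ hdisj)), Nat.card_sum,
    card_ltMaxPrevTwo_apply_zero_eq_last, card_ltMaxPrevTwo_apply_one_eq_last]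

theorem a12_21_3_eq_card (n : ℕ) : a12_21_3 n = Nat.card {π : Perm (Fin n) // LtMaxPrevTwo π} :=
  Nat.card_congr (subtypeEquivRight not_occ12_3_and_not_occ21_3_iff)

theorem a12_21_3_of_le_one {n : ℕ} (hn : n ≤ 1) : a12_21_3 n = 1 := by
  rw [a12_21_3_eq_card, Nat.card_congr (subtypeUnivEquiv (p := fun π : Perm (Fin n) =>
      LtMaxPrevTwo π) fun π => ltMaxPrevTwo_of_lt_three (by omega) π), Nat.card_perm, Nat.card_fin]
  interval_cases n <;> rfl

theorem a12_21_3_add_two (n : ℕ) :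
    a12_21_3 (n + 2) = a12_21_3 (n + 1) + (n + 1) * a12_21_3 n := by
  simp only [a12_21_3_eq_card, card_ltMaxPrevTwo_add_two]

namespace PowerSeries

theorem eq_of_derivative_eq_mul {R : Type*} [CommRing R] [IsDomain R] [CharZero R]
    {f g h : R⟦X⟧} (hf : d⁄dX R f = f * h) (hg : d⁄dX R g = g * h)
    (h0 : constantCoeff f = constantCoeff g) :
    f = g := by
  ext n
  induction n using Nat.strong_induction_on with
  | _ n ih =>
    cases n with
    | zero => simpa using h0
    | succ n =>
      have hfg : coeff n (f * h) = coeff n (g * h) := by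
        rw [coeff_mul, coeff_mul]
        refine Finset.sum_congr rfl fun p hp => ?_
        rw [ih p.1 (Finset.Nat.antidiagonal.fst_lt hp)]
      have hd : coeff n (d⁄dX R f) = coeff n (d⁄dX R g) := by rw [hf, hg, hfg]
      rw [coeff_derivative, coeff_derivative] at hd
      exact mul_right_cancel₀ (Nat.cast_add_one_ne_zero n) hd

theorem coeff_pow_eq_zero_of_constantCoeff_eq_zero {R : Type*} [Semiring R] {S : R⟦X⟧}
    (hS : constantCoeff S = 0) {n m : ℕ} (h : n < m) : coeff n (S ^ m) = 0 :=
  coeff_of_lt_order n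
    ((ENat.natCast_lt_natCast.2 h).trans_le (le_order_pow_of_constantCoeff_eq_zero m hS))

end PowerSeries

theorem psExp_eq_subst_exp {S : ℚ⟦X⟧} (hS : constantCoeff S = 0) :
    psExp S = (exp ℚ).subst S := by
  ext n
  rw [psExp, coeff_mk, coeff_subst' (HasSubst.of_constantCoeff_zero' hS),
    finsum_eq_sum_of_support_subset (s := Finset.range (n + 1))]
  · refine Finset.sum_congr rfl fun m _ => ?_
    simp [coeff_exp, div_eq_inv_mul]
  · intro m hm
    simp only [Function.mem_support, Finset.coe_range, Set.mem_Iio] at hm ⊢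
    by_contra h
    exact hm (by rw [coeff_pow_eq_zero_of_constantCoeff_eq_zero hS (by omega), smul_zero])

theorem derivative_psExp {S : ℚ⟦X⟧} (hS : constantCoeff S = 0) :
    d⁄dX ℚ (psExp S) = psExp S * d⁄dX ℚ S := by
  rw [psExp_eq_subst_exp hS, derivative_subst (HasSubst.of_constantCoeff_zero' hS), derivative_exp]

theorem constantCoeff_psExp (S : ℚ⟦X⟧) : constantCoeff (psExp S) = 1 := by
  rw [← coeff_zero_eq_constantCoeff_apply, psExp, coeff_mk]
  simp

theorem derivative_egf_of_involution_recurrence {u : ℕ → ℚ} (h1 : u 1 = u 0)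
    (h : ∀ n, u (n + 2) = u (n + 1) + (n + 1) * u n) :
    d⁄dX ℚ (mk fun n => u n / n.factorial) = (mk fun n => u n / n.factorial) * (1 + X) := by
  ext n
  rw [coeff_derivative, mul_one_add, map_add]
  cases n with
  | zero => simp [h1]
  | succ n =>
    rw [coeff_succ_mul_X, coeff_mk, coeff_mk, coeff_mk, h, Nat.factorial_succ (n + 1),
      Nat.factorial_succ n]
    push_cast
    field_simp

/-- The exponential generating function for the number of permutations of `[n]`
avoiding both generalized patterns `12-3` and `21-3` is `e^{x + x²/2}`. -/
theorem a12_21_3_egf :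
    (PowerSeries.mk fun n => (a12_21_3 n : ℚ) / (Nat.factorial n)) =
      psExp ((PowerSeries.X : PowerSeries ℚ) +
        (2 : ℚ)⁻¹ • (PowerSeries.X : PowerSeries ℚ) ^ 2) := by
  have hS : constantCoeff ((X : ℚ⟦X⟧) + (2 : ℚ)⁻¹ • X ^ 2) = 0 := by simp
  have hS_deriv : d⁄dX ℚ ((X : ℚ⟦X⟧) + (2 : ℚ)⁻¹ • X ^ 2) = 1 + X := by
    simp [two_mul, ← two_smul ℚ (X : ℚ⟦X⟧), smul_smul]
  refine eq_of_derivative_eq_mul (h := 1 + X)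
    (derivative_egf_of_involution_recurrence ?_ fun n => ?_) ?_ ?_
  · rw [a12_21_3_of_le_one le_rfl, a12_21_3_of_le_one zero_le_one]
  · exact_mod_cast a12_21_3_add_two n
  · rw [derivative_psExp hS, hS_deriv]
  · rw [constantCoeff_psExp, ← coeff_zero_eq_constantCoeff_apply, coeff_mk,
      a12_21_3_of_le_one zero_le_one]
    simp
end
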